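/- arXiv:2310.13692 — 4 statements merged into one kernel-verified Lean document; each statement's English description precedes it below -/
import Mathlib

section
/- Let Z₁, …, Zₙ be independent real-valued random variables on a probability space, each almost surely nonnegative, and let K ≥ 0. Then the variance of min(∑ᵢ Zᵢ, K) is at most ∑ᵢ E[min(Zᵢ, K)²]. -/
open ProbabilityTheory MeasureTheory

section helpers
variable {K x x' y : ℝ}

lemma pt_concave (h : x' ≤ x) (hy : 0 ≤ y) :
    min (x + y) K - min (x' + y) K ≤ min x K - min x' K := by
  simp only [min_def]; split_ifs <;> linarith

lemma pt_lip (hx : 0 ≤ x) (hy : 0 ≤ y) (hK : 0 ≤ K) :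
    min (x + y) K - min x K ≤ min y K := by
  simp only [min_def]; split_ifs <;> linarith

variable (ρ : Measure ℝ) [IsProbabilityMeasure ρ] (hρ : ∀ᵐ y ∂ρ, 0 ≤ y)

lemma Fx_int (K x : ℝ) (hρ : ∀ᵐ y ∂ρ, 0 ≤ y) : Integrable (fun y => min (x + y) K) ρ := by
  refine (integrable_const (|x| + |K|)).mono'
    ((measurable_const.add measurable_id).min measurable_const).aestronglyMeasurable ?_
  filter_upwards [hρ] with y hy
  rw [Real.norm_eq_abs, abs_le]
  constructor
  · have : min x K ≤ min (x + y) K := min_le_min (by linarith) le_rfl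
    have h2 : -(|x| + |K|) ≤ min x K := by
      simp only [min_def]; split_ifs <;> cases abs_cases x <;> cases abs_cases K <;> linarith
    linarith
  · have : min (x + y) K ≤ K := min_le_right _ _
    cases abs_cases K with
    | inl h => cases abs_cases x with
      | inl h2 => linarith
      | inr h2 => linarith
    | inr h => cases abs_cases x with
      | inl h2 => linarith
      | inr h2 => linarith

lemma Fx_sq_int (K x : ℝ) (hρ : ∀ᵐ y ∂ρ, 0 ≤ y) :
    Integrable (fun y => min (x + y) K ^ 2) ρ := by
  refine (integrable_const ((|x| + |K|) ^ 2)).mono'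
    (((measurable_const.add measurable_id).min measurable_const).pow_const 2).aestronglyMeasurable ?_
  have := (Fx_int ρ K x hρ).2
  filter_upwards [hρ] with y hy
  have hb : |min (x + y) K| ≤ |x| + |K| := by
    rw [abs_le]
    constructor
    · have : min x K ≤ min (x + y) K := min_le_min (by linarith) le_rfl
      have h2 : -(|x| + |K|) ≤ min x K := by
        simp only [min_def]; split_ifs <;> cases abs_cases x <;> cases abs_cases K <;> linarith
      linarith
    · have : min (x + y) K ≤ K := min_le_right _ _
      cases abs_cases K <;> cases abs_cases x <;> linarith
  rw [Real.norm_eq_abs, abs_pow]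
  exact pow_le_pow_left₀ (abs_nonneg _) hb 2

/-- contraction property of `x ↦ ∫ min (x+y) K dρ(y)` relative to `x ↦ min x K`. -/
lemma g_diff_sq (K : ℝ) (x x' : ℝ) (hρ : ∀ᵐ y ∂ρ, 0 ≤ y) :
    ((∫ y, min (x + y) K ∂ρ) - ∫ y, min (x' + y) K ∂ρ) ^ 2
      ≤ (min x K - min x' K) ^ 2 := by
  have key : ∀ a b : ℝ, b ≤ a →
      ((∫ y, min (a + y) K ∂ρ) - ∫ y, min (b + y) K ∂ρ) ^ 2 ≤ (min a K - min b K) ^ 2 := by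
    intro a b hba
    have h0 : (0:ℝ) ≤ (∫ y, min (a + y) K ∂ρ) - ∫ y, min (b + y) K ∂ρ := by
      have := integral_mono (Fx_int ρ K b hρ) (Fx_int ρ K a hρ)
        (fun y => min_le_min (by linarith) le_rfl)
      linarith
    have h1 : (∫ y, min (a + y) K ∂ρ) - (∫ y, min (b + y) K ∂ρ) ≤ min a K - min b K := by
      rw [← integral_sub (Fx_int ρ K a hρ) (Fx_int ρ K b hρ)]
      have : ∫ (y : ℝ), (min a K - min b K) ∂ρ = min a K - min b K := by simp
      rw [← this]
      refine integral_mono_ae ((Fx_int ρ K a hρ).sub (Fx_int ρ K b hρ)) (integrable_const _) ?_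
      filter_upwards [hρ] with y hy
      exact pt_concave hba hy
    exact pow_le_pow_left₀ h0 h1 2
  rcases le_total x' x with h | h
  · exact key x x' h
  · have := key x' x h
    calc ((∫ y, min (x + y) K ∂ρ) - ∫ y, min (x' + y) K ∂ρ) ^ 2
        = ((∫ y, min (x' + y) K ∂ρ) - ∫ y, min (x + y) K ∂ρ) ^ 2 := by ring
      _ ≤ (min x' K - min x K) ^ 2 := this
      _ = (min x K - min x' K) ^ 2 := by ring

end helpers

lemma doubling' (ν : Measure ℝ) [IsProbabilityMeasure ν] (h : ℝ → ℝ) (hm : Measurable h)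
    (C : ℝ) (hb : ∀ᵐ x ∂ν, |h x| ≤ C) :
    ∫ p : ℝ × ℝ, (h p.1 - h p.2) ^ 2 ∂(ν.prod ν)
      = 2 * (∫ x, h x ^ 2 ∂ν) - 2 * (∫ x, h x ∂ν) ^ 2 := by
  have hC : 0 ≤ C := le_trans (abs_nonneg _) hb.exists.choose_spec
  have hb1 : ∀ᵐ p : ℝ × ℝ ∂(ν.prod ν), |h p.1| ≤ C :=
    Measure.quasiMeasurePreserving_fst.tendsto_ae.eventually hb
  have hb2 : ∀ᵐ p : ℝ × ℝ ∂(ν.prod ν), |h p.2| ≤ C :=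
    Measure.quasiMeasurePreserving_snd.tendsto_ae.eventually hb
  have hint : ∀ (g : ℝ × ℝ → ℝ) (D : ℝ), Measurable g →
      (∀ᵐ p : ℝ × ℝ ∂(ν.prod ν), ‖g p‖ ≤ D) → Integrable g (ν.prod ν) := fun g D hg hgb =>
    (integrable_const _).mono' hg.aestronglyMeasurable hgb
  have hmf : Measurable fun p : ℝ × ℝ => h p.1 := hm.comp measurable_fst
  have hms : Measurable fun p : ℝ × ℝ => h p.2 := hm.comp measurable_snd
  have i1 : Integrable (fun p : ℝ × ℝ => h p.1 ^ 2) (ν.prod ν) := by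
    refine hint _ (C ^ 2) (hmf.pow_const 2) ?_
    filter_upwards [hb1] with p hp
    rw [Real.norm_eq_abs, abs_pow]
    exact pow_le_pow_left₀ (abs_nonneg _) hp 2
  have i2 : Integrable (fun p : ℝ × ℝ => h p.2 ^ 2) (ν.prod ν) := by
    refine hint _ (C ^ 2) (hms.pow_const 2) ?_
    filter_upwards [hb2] with p hp
    rw [Real.norm_eq_abs, abs_pow]
    exact pow_le_pow_left₀ (abs_nonneg _) hp 2
  have i3 : Integrable (fun p : ℝ × ℝ => h p.1 * h p.2) (ν.prod ν) := by
    refine hint _ (C * C) (hmf.mul hms) ?_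
    filter_upwards [hb1, hb2] with p hp1 hp2
    rw [Real.norm_eq_abs, abs_mul]
    exact mul_le_mul hp1 hp2 (abs_nonneg _) hC
  have ih : Integrable h ν := (integrable_const C).mono' hm.aestronglyMeasurable (by simpa)
  have ih2 : Integrable (fun x => h x ^ 2) ν := by
    refine (integrable_const (C ^ 2)).mono' (hm.pow_const 2).aestronglyMeasurable ?_
    filter_upwards [hb] with x hx
    rw [Real.norm_eq_abs, abs_pow]
    exact pow_le_pow_left₀ (abs_nonneg _) hx 2
  have expand : ∀ p : ℝ × ℝ, (h p.1 - h p.2) ^ 2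
      = h p.1 ^ 2 + h p.2 ^ 2 - 2 * (h p.1 * h p.2) := fun p => by ring
  simp_rw [expand]
  have i12 : Integrable (fun p : ℝ × ℝ => h p.1 ^ 2 + h p.2 ^ 2) (ν.prod ν) := i1.add i2
  rw [integral_sub i12 (i3.const_mul 2), integral_add i1 i2, integral_const_mul]
  have e1 : ∫ p : ℝ × ℝ, h p.1 ^ 2 ∂(ν.prod ν) = ∫ x, h x ^ 2 ∂ν := by
    rw [MeasureTheory.integral_prod _ i1]; simp
  have e2 : ∫ p : ℝ × ℝ, h p.2 ^ 2 ∂(ν.prod ν) = ∫ x, h x ^ 2 ∂ν := by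
    rw [MeasureTheory.integral_prod _ i2]; simp
  have e3 : ∫ p : ℝ × ℝ, h p.1 * h p.2 ∂(ν.prod ν) = (∫ x, h x ∂ν) ^ 2 := by
    rw [MeasureTheory.integral_prod _ i3]
    simp_rw [integral_const_mul]
    rw [integral_mul_const]; ring
  rw [e1, e2, e3]; ring

lemma step_real (ν ρ : Measure ℝ) [IsProbabilityMeasure ν] [IsProbabilityMeasure ρ]
    (hν : ∀ᵐ x ∂ν, 0 ≤ x) (hρ : ∀ᵐ y ∂ρ, 0 ≤ y) (K : ℝ) (hK : 0 ≤ K) :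
    (∫ p : ℝ × ℝ, min (p.1 + p.2) K ^ 2 ∂(ν.prod ρ))
        - (∫ p : ℝ × ℝ, min (p.1 + p.2) K ∂(ν.prod ρ)) ^ 2
      ≤ ((∫ x, min x K ^ 2 ∂ν) - (∫ x, min x K ∂ν) ^ 2) + ∫ y, min y K ^ 2 ∂ρ := by
  have hFm : Measurable fun p : ℝ × ℝ => min (p.1 + p.2) K :=
    (measurable_fst.add measurable_snd).min measurable_const
  set g : ℝ → ℝ := fun x => ∫ y, min (x + y) K ∂ρ with hg_def
  set G2 : ℝ → ℝ := fun x => ∫ y, min (x + y) K ^ 2 ∂ρ with hG2_def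
  set M : ℝ := ∫ y, min y K ^ 2 ∂ρ with hM_def
  have hM0 : 0 ≤ M := integral_nonneg fun y => sq_nonneg _
  have hae1 : ∀ᵐ p : ℝ × ℝ ∂(ν.prod ρ), 0 ≤ p.1 :=
    Measure.quasiMeasurePreserving_fst.tendsto_ae.eventually hν
  have hae2 : ∀ᵐ p : ℝ × ℝ ∂(ν.prod ρ), 0 ≤ p.2 :=
    Measure.quasiMeasurePreserving_snd.tendsto_ae.eventually hρ
  have hFb : ∀ᵐ p : ℝ × ℝ ∂(ν.prod ρ), 0 ≤ min (p.1 + p.2) K ∧ min (p.1 + p.2) K ≤ K := by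
    filter_upwards [hae1, hae2] with p h1 h2
    exact ⟨le_min (by linarith) hK, min_le_right _ _⟩
  have iF : Integrable (fun p : ℝ × ℝ => min (p.1 + p.2) K) (ν.prod ρ) := by
    refine (integrable_const K).mono' hFm.aestronglyMeasurable ?_
    filter_upwards [hFb] with p hp
    rw [Real.norm_eq_abs, abs_le]; exact ⟨by linarith [hp.1], hp.2⟩
  have iF2 : Integrable (fun p : ℝ × ℝ => min (p.1 + p.2) K ^ 2) (ν.prod ρ) := by
    refine (integrable_const (K ^ 2)).mono' (hFm.pow_const 2).aestronglyMeasurable ?_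
    filter_upwards [hFb] with p hp
    rw [Real.norm_eq_abs, abs_pow]
    exact pow_le_pow_left₀ (abs_nonneg _) (abs_le.mpr ⟨by linarith [hp.1], hp.2⟩) 2
  have hgm : Measurable g :=
    (StronglyMeasurable.integral_prod_right' (hFm.stronglyMeasurable)).measurable
  have hG2m : Measurable G2 :=
    (StronglyMeasurable.integral_prod_right' ((hFm.pow_const 2).stronglyMeasurable)).measurable
  -- pointwise facts for x ≥ 0
  have hxfact : ∀ x : ℝ, 0 ≤ x →
      (0 ≤ g x ∧ g x ≤ K) ∧ (0 ≤ G2 x ∧ G2 x ≤ K ^ 2) ∧ G2 x - g x ^ 2 ≤ M := by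
    intro x hx
    have ib : ∀ᵐ y ∂ρ, 0 ≤ min (x + y) K ∧ min (x + y) K ≤ K := by
      filter_upwards [hρ] with y hy
      exact ⟨le_min (by linarith) hK, min_le_right _ _⟩
    have iFx := Fx_int ρ K x hρ
    have iFx2 := Fx_sq_int ρ K x hρ
    have hg0 : 0 ≤ g x := by
      refine integral_nonneg_of_ae ?_
      filter_upwards [ib] with y hy using hy.1
    have hgK : g x ≤ K := by
      have : ∫ y, min (x + y) K ∂ρ ≤ ∫ _, K ∂ρ := by
        refine integral_mono_ae iFx (integrable_const _) ?_
        filter_upwards [ib] with y hy using hy.2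
      simpa using this
    have hG20 : 0 ≤ G2 x := integral_nonneg fun y => sq_nonneg _
    have hG2K : G2 x ≤ K ^ 2 := by
      have : ∫ y, min (x + y) K ^ 2 ∂ρ ≤ ∫ _, K ^ 2 ∂ρ := by
        refine integral_mono_ae iFx2 (integrable_const _) ?_
        filter_upwards [ib] with y hy
        calc min (x + y) K ^ 2 = |min (x + y) K| ^ 2 := by rw [sq_abs]
          _ ≤ K ^ 2 := pow_le_pow_left₀ (abs_nonneg _) (abs_le.mpr ⟨by linarith [hy.1], hy.2⟩) 2
      simpa using this
    refine ⟨⟨hg0, hgK⟩, ⟨hG20, hG2K⟩, ?_⟩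
    have isub : Integrable (fun y => min (x + y) K ^ 2 - 2 * min x K * min (x + y) K) ρ := by
      exact iFx2.sub (iFx.const_mul _)
    have idiff : Integrable (fun y => (min (x + y) K - min x K) ^ 2) ρ := by
      have heq : (fun y => (min (x + y) K - min x K) ^ 2)
          = fun y => (min (x + y) K ^ 2 - 2 * min x K * min (x + y) K) + min x K ^ 2 := by
        funext y; ring
      rw [heq]
      exact isub.add (integrable_const _)
    have exp_eq : ∫ y, (min (x + y) K - min x K) ^ 2 ∂ρ
        = G2 x - 2 * min x K * g x + min x K ^ 2 := by
      have heq : (fun y => (min (x + y) K - min x K) ^ 2)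
          = fun y => (min (x + y) K ^ 2 - 2 * min x K * min (x + y) K) + min x K ^ 2 := by
        funext y; ring
      rw [heq, integral_add isub (integrable_const _),
        integral_sub iFx2 (iFx.const_mul _), integral_const_mul]
      simp [hg_def, hG2_def]
    have le2 : ∫ y, (min (x + y) K - min x K) ^ 2 ∂ρ ≤ M := by
      refine integral_mono_ae idiff ?_ ?_
      · refine (integrable_const (K ^ 2)).mono'
          ((measurable_id.min measurable_const).pow_const 2).aestronglyMeasurable ?_
        filter_upwards [hρ] with y hy
        rw [Real.norm_eq_abs, abs_pow]
        exact pow_le_pow_left₀ (abs_nonneg _)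
          (abs_le.mpr ⟨by linarith [le_min hy hK], min_le_right _ _⟩) 2
      · filter_upwards [hρ] with y hy
        have h0 : 0 ≤ min (x + y) K - min x K := by
          have := min_le_min (show x ≤ x + y by linarith) (le_refl K)
          linarith
        exact pow_le_pow_left₀ h0 (pt_lip hx hy hK) 2
    nlinarith [sq_nonneg (min x K - g x)]
  have haeg : ∀ᵐ x ∂ν,
      (0 ≤ g x ∧ g x ≤ K) ∧ (0 ≤ G2 x ∧ G2 x ≤ K ^ 2) ∧ G2 x - g x ^ 2 ≤ M := by
    filter_upwards [hν] with x hx using hxfact x hx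
  -- integrabilities over ν
  have ig : Integrable g ν := by
    refine (integrable_const K).mono' hgm.aestronglyMeasurable ?_
    filter_upwards [haeg] with x hx
    rw [Real.norm_eq_abs, abs_le]; exact ⟨by linarith [hx.1.1, hK], hx.1.2⟩
  have ig2 : Integrable (fun x => g x ^ 2) ν := by
    refine (integrable_const (K ^ 2)).mono' (hgm.pow_const 2).aestronglyMeasurable ?_
    filter_upwards [haeg] with x hx
    rw [Real.norm_eq_abs, abs_pow]
    exact pow_le_pow_left₀ (abs_nonneg _) (abs_le.mpr ⟨by linarith [hx.1.1, hK], hx.1.2⟩) 2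
  have iG2 : Integrable G2 ν := by
    refine (integrable_const (K ^ 2)).mono' hG2m.aestronglyMeasurable ?_
    filter_upwards [haeg] with x hx
    rw [Real.norm_eq_abs, abs_le]
    exact ⟨by linarith [hx.2.1.1, sq_nonneg K], hx.2.1.2⟩
  -- Fubini
  have A2 : ∫ p : ℝ × ℝ, min (p.1 + p.2) K ^ 2 ∂(ν.prod ρ) = ∫ x, G2 x ∂ν := by
    rw [MeasureTheory.integral_prod _ iF2]
  have A1 : ∫ p : ℝ × ℝ, min (p.1 + p.2) K ∂(ν.prod ρ) = ∫ x, g x ∂ν := by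
    rw [MeasureTheory.integral_prod _ iF]
  rw [A1, A2]
  -- term 1
  have T1 : ∫ x, G2 x ∂ν ≤ (∫ x, g x ^ 2 ∂ν) + M := by
    have heq : ∫ x, (g x ^ 2 + M) ∂ν = (∫ x, g x ^ 2 ∂ν) + M := by
      rw [integral_add ig2 (integrable_const _)]; simp
    rw [← heq]
    refine integral_mono_ae iG2 (ig2.add (integrable_const _)) ?_
    filter_upwards [haeg] with x hx
    linarith [hx.2.2, sq_nonneg (g x)]
  -- term 2
  have T2 : (∫ x, g x ^ 2 ∂ν) - (∫ x, g x ∂ν) ^ 2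
      ≤ (∫ x, min x K ^ 2 ∂ν) - (∫ x, min x K ∂ν) ^ 2 := by
    have hgb : ∀ᵐ x ∂ν, |g x| ≤ K := by
      filter_upwards [haeg] with x hx
      rw [abs_le]; exact ⟨by linarith [hx.1.1, hK], hx.1.2⟩
    have hfb : ∀ᵐ x ∂ν, |min x K| ≤ K := by
      filter_upwards [hν] with x hx
      rw [abs_le]; exact ⟨by linarith [le_min hx hK], min_le_right _ _⟩
    have dg := doubling' ν g hgm K hgb
    have df := doubling' ν (fun x => min x K) (measurable_id.min measurable_const) K hfb
    have hbgf : ∀ᵐ x ∂ν, |g x| ≤ K ∧ |min x K| ≤ K := by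
      filter_upwards [hgb, hfb] with x h1 h2 using ⟨h1, h2⟩
    have hb1 : ∀ᵐ p : ℝ × ℝ ∂(ν.prod ν), |g p.1| ≤ K ∧ |min p.1 K| ≤ K :=
      Measure.quasiMeasurePreserving_fst.tendsto_ae.eventually hbgf
    have hb2 : ∀ᵐ p : ℝ × ℝ ∂(ν.prod ν), |g p.2| ≤ K ∧ |min p.2 K| ≤ K :=
      Measure.quasiMeasurePreserving_snd.tendsto_ae.eventually hbgf
    have hcomp : ∫ p : ℝ × ℝ, (g p.1 - g p.2) ^ 2 ∂(ν.prod ν)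
        ≤ ∫ p : ℝ × ℝ, (min p.1 K - min p.2 K) ^ 2 ∂(ν.prod ν) := by
      refine integral_mono_ae ?_ ?_ ?_
      · refine (integrable_const ((2 * K) ^ 2)).mono'
          (((hgm.comp measurable_fst).sub
            (hgm.comp measurable_snd)).pow_const 2).aestronglyMeasurable ?_
        filter_upwards [hb1, hb2] with p h1 h2
        rw [Real.norm_eq_abs, abs_pow]
        refine pow_le_pow_left₀ (abs_nonneg _) ?_ 2
        calc |g p.1 - g p.2| ≤ |g p.1| + |g p.2| := abs_sub _ _
          _ ≤ 2 * K := by linarith [h1.1, h2.1]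
      · refine (integrable_const ((2 * K) ^ 2)).mono'
          (((measurable_fst.min measurable_const).sub
            ((measurable_snd.min measurable_const))).pow_const 2).aestronglyMeasurable ?_
        filter_upwards [hb1, hb2] with p h1 h2
        rw [Real.norm_eq_abs, abs_pow]
        refine pow_le_pow_left₀ (abs_nonneg _) ?_ 2
        calc |min p.1 K - min p.2 K| ≤ |min p.1 K| + |min p.2 K| := abs_sub _ _
          _ ≤ 2 * K := by linarith [h1.2, h2.2]
      · exact Filter.Eventually.of_forall fun p => g_diff_sq ρ K p.1 p.2 hρ
    linarith [dg, df, hcomp]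
  linarith [T1, T2]

lemma step' {Ω : Type*} {mΩ : MeasurableSpace Ω} (μ : Measure Ω) [IsProbabilityMeasure μ]
    (X Y : Ω → ℝ) (hX : Measurable X) (hY : Measurable Y) (hind : IndepFun X Y μ)
    (hX0 : ∀ᵐ ω ∂μ, 0 ≤ X ω) (hY0 : ∀ᵐ ω ∂μ, 0 ≤ Y ω) (K : ℝ) (hK : 0 ≤ K) :
    variance (fun ω => min (X ω + Y ω) K) μ
      ≤ variance (fun ω => min (X ω) K) μ + ∫ ω, min (Y ω) K ^ 2 ∂μ := by
  have hFm : Measurable fun p : ℝ × ℝ => min (p.1 + p.2) K :=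
    (measurable_fst.add measurable_snd).min measurable_const
  have hmem1 : MemLp (fun ω => min (X ω + Y ω) K) 2 μ := by
    refine MemLp.of_bound ((hX.add hY).min measurable_const).aestronglyMeasurable K ?_
    filter_upwards [hX0, hY0] with ω h1 h2
    rw [Real.norm_eq_abs, abs_le]
    exact ⟨by linarith [le_min (show (0:ℝ) ≤ X ω + Y ω by linarith) hK], min_le_right _ _⟩
  have hmem2 : MemLp (fun ω => min (X ω) K) 2 μ := by
    refine MemLp.of_bound (hX.min measurable_const).aestronglyMeasurable K ?_
    filter_upwards [hX0] with ω h1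
    rw [Real.norm_eq_abs, abs_le]
    exact ⟨by linarith [le_min h1 hK], min_le_right _ _⟩
  rw [variance_eq_sub hmem1, variance_eq_sub hmem2]
  have hmap : μ.map (fun ω => (X ω, Y ω)) = (μ.map X).prod (μ.map Y) :=
    (indepFun_iff_map_prod_eq_prod_map_map hX.aemeasurable hY.aemeasurable).mp hind
  have : IsProbabilityMeasure (μ.map X) := Measure.isProbabilityMeasure_map hX.aemeasurable
  have : IsProbabilityMeasure (μ.map Y) := Measure.isProbabilityMeasure_map hY.aemeasurable
  have hν : ∀ᵐ x ∂(μ.map X), 0 ≤ x := by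
    rw [ae_map_iff hX.aemeasurable (by exact measurableSet_Ici : MeasurableSet {x : ℝ | 0 ≤ x})]
    exact hX0
  have hρ : ∀ᵐ y ∂(μ.map Y), 0 ≤ y := by
    rw [ae_map_iff hY.aemeasurable (by exact measurableSet_Ici : MeasurableSet {x : ℝ | 0 ≤ x})]
    exact hY0
  have key := step_real (μ.map X) (μ.map Y) hν hρ K hK
  have e1 : ∫ p : ℝ × ℝ, min (p.1 + p.2) K ∂((μ.map X).prod (μ.map Y))
      = ∫ ω, min (X ω + Y ω) K ∂μ := by
    rw [← hmap, integral_map (hX.prodMk hY).aemeasurable hFm.aestronglyMeasurable]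
  have e2 : ∫ p : ℝ × ℝ, min (p.1 + p.2) K ^ 2 ∂((μ.map X).prod (μ.map Y))
      = ∫ ω, min (X ω + Y ω) K ^ 2 ∂μ := by
    rw [← hmap, integral_map (hX.prodMk hY).aemeasurable
      (hFm.pow_const 2).aestronglyMeasurable]
  have e3 : ∫ x, min x K ∂(μ.map X) = ∫ ω, min (X ω) K ∂μ := by
    rw [integral_map hX.aemeasurable (measurable_id'.min measurable_const).aestronglyMeasurable]
  have e4 : ∫ x, min x K ^ 2 ∂(μ.map X) = ∫ ω, min (X ω) K ^ 2 ∂μ := by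
    rw [integral_map hX.aemeasurable
      ((measurable_id'.min measurable_const).pow_const 2).aestronglyMeasurable]
  have e5 : ∫ y, min y K ^ 2 ∂(μ.map Y) = ∫ ω, min (Y ω) K ^ 2 ∂μ := by
    rw [integral_map hY.aemeasurable
      ((measurable_id'.min measurable_const).pow_const 2).aestronglyMeasurable]
  rw [e1, e2, e3, e4, e5] at key
  simp only [Pi.pow_apply]
  convert key using 2


/-- Efron–Stein type bound: if `Z₁, …, Zₙ` are independent real-valued random variables, each
almost surely nonnegative, and `K ≥ 0`, then the variance of `min(∑ᵢ Zᵢ, K)` is at most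
`∑ᵢ E[min(Zᵢ, K)²]`. -/
theorem variance_min_sum_le {Ω : Type*} {mΩ : MeasurableSpace Ω}
    (μ : Measure Ω) [IsProbabilityMeasure μ]
    (n : ℕ) (Z : Fin n → Ω → ℝ) (hmeas : ∀ i, Measurable (Z i))
    (hindep : iIndepFun Z μ)
    (hnonneg : ∀ i, ∀ᵐ ω ∂μ, 0 ≤ Z i ω)
    (K : ℝ) (hK : 0 ≤ K) :
    variance (fun ω => min (∑ i, Z i ω) K) μ ≤ ∑ i, ∫ ω, (min (Z i ω) K) ^ 2 ∂μ := by
  classical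
  have hall : ∀ᵐ ω ∂μ, ∀ i, 0 ≤ Z i ω := (ae_all_iff).mpr hnonneg
  have key : ∀ s : Finset (Fin n),
      variance (fun ω => min (∑ i ∈ s, Z i ω) K) μ ≤ ∑ i ∈ s, ∫ ω, (min (Z i ω) K) ^ 2 ∂μ := by
    intro s
    induction s using Finset.induction_on with
    | empty =>
      have : (fun ω : Ω => min (∑ i ∈ (∅ : Finset (Fin n)), Z i ω) K) = (0 : Ω → ℝ) := by
        funext ω; simp [min_eq_left hK]
      rw [this, variance_zero]
      simp
    | @insert a s ha ih =>
      have hXm : Measurable fun ω => ∑ i ∈ s, Z i ω :=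
        Finset.measurable_sum s fun i _ => hmeas i
      have hind' : IndepFun (fun ω => ∑ i ∈ s, Z i ω) (Z a) μ := by
        have h := hindep.indepFun_finsetSum_of_notMem hmeas ha
        have hfe : (∑ i ∈ s, Z i) = fun ω => ∑ i ∈ s, Z i ω := by
          funext ω; exact Finset.sum_apply ω s Z
        rwa [hfe] at h
      have hX0 : ∀ᵐ ω ∂μ, 0 ≤ ∑ i ∈ s, Z i ω := by
        filter_upwards [hall] with ω hω
        exact Finset.sum_nonneg fun i _ => hω i
      have hfuneq : (fun ω => min (∑ i ∈ insert a s, Z i ω) K)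
          = fun ω => min ((∑ i ∈ s, Z i ω) + Z a ω) K := by
        funext ω; rw [Finset.sum_insert ha, add_comm]
      rw [hfuneq, Finset.sum_insert ha]
      have := step' μ (fun ω => ∑ i ∈ s, Z i ω) (Z a) hXm (hmeas a) hind'
        hX0 (hnonneg a) K hK
      linarith
  simpa using key Finset.univ
end

section
/- Define G : ℂ → ℂ → ℝ by G(v,w) := log( (max(|v|,1))²·(max(|w|,1))² / ( |v−w|·|v−conj(w)| ) ). Then for every x ∈ ℝ the double integral V(x) := π⁻² ∫₀^π ∫₀^π G(x + e^{iθ}, x + e^{iφ}) dθ dφ converges absolutely, and the function x ↦ V(x) is continuous on ℝ. -/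
/-- The Neumann Green's function of the upper half-plane normalized on the unit semicircle:
`G(v,w) = log( max(|v|,1)²·max(|w|,1)² / (|v−w|·|v−conj w|) )`. -/
noncomputable def G (v w : ℂ) : ℝ :=
  Real.log ((max ‖v‖ 1) ^ 2 * (max ‖w‖ 1) ^ 2 /
    (‖v - w‖ * ‖v - (starRingEnd ℂ) w‖))

namespace VarAux
open MeasureTheory Set Real


noncomputable def g (u : ℝ) : ℝ := abs (Real.log (abs u))

lemma g_nonneg (u : ℝ) : 0 ≤ g u := abs_nonneg _

lemma g_neg (u : ℝ) : g (-u) = g u := by simp [g]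

lemma g_meas : Measurable g := by
  have : Measurable fun u : ℝ => abs (Real.log (abs u)) :=
    (Real.measurable_log.comp continuous_abs.measurable).abs
  exact this

lemma integrableOn_log_Ioc {c : ℝ} (hc : 0 < c) : IntegrableOn Real.log (Ioc 0 c) := by
  have h1 : IntegrableOn Real.log (Ioc 0 1) := by
    have h : IntegrableOn (fun x : ℝ => -Real.log x) (Ioc (0:ℝ) 1) := by
      apply intervalIntegral.integrableOn_deriv_of_nonneg (g := fun x => x - x * Real.log x)
      · exact (continuous_id.sub Real.continuous_mul_log).continuousOn
      · intro x hx
        have h := (hasDerivAt_id x).sub (Real.hasDerivAt_mul_log (ne_of_gt hx.1))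
        refine h.congr_deriv ?_
        ring
      · intro x hx
        simp only [neg_nonneg]
        exact Real.log_nonpos hx.1.le hx.2.le
    exact h.neg.congr (Filter.Eventually.of_forall fun x => by simp)
  rcases le_total c 1 with h | h
  · exact h1.mono_set (Ioc_subset_Ioc_right h)
  · have h2 : IntegrableOn Real.log (Icc 1 c) := by
      apply ContinuousOn.integrableOn_compact isCompact_Icc
      exact Real.continuousOn_log.mono (by
        intro x hx
        exact ne_of_gt (lt_of_lt_of_le one_pos hx.1))
    have : Ioc (0:ℝ) c = Ioc 0 1 ∪ Ioc 1 c := (Ioc_union_Ioc_eq_Ioc zero_le_one h).symm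
    rw [this]
    exact h1.union (h2.mono_set Ioc_subset_Icc_self)

lemma II_logabs (a b : ℝ) : IntervalIntegrable (fun u => Real.log |u|) volume a b := by
  have base : ∀ c : ℝ, 0 < c → IntervalIntegrable (fun u => Real.log |u|) volume 0 c := by
    intro c hc
    rw [intervalIntegrable_iff_integrableOn_Ioc_of_le hc.le]
    exact (integrableOn_log_Ioc hc).congr_fun (fun x hx => by
      rw [abs_of_pos hx.1]) measurableSet_Ioc
  have baseneg : ∀ c : ℝ, 0 < c → IntervalIntegrable (fun u => Real.log |u|) volume (-c) 0 := by
    intro c hc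
    have h := ((base c hc).comp_sub_left 0).symm
    simpa using h
  set M := max (max (|a|) (|b|)) 1 with hM
  have hM1 : 0 < M := lt_of_lt_of_le one_pos (le_max_right _ _)
  have big : IntervalIntegrable (fun u => Real.log |u|) volume (-M) M :=
    (baseneg M hM1).trans (base M hM1)
  apply big.mono_set
  have ha : a ∈ Icc (-M) M := mem_Icc.mpr (abs_le.mp ((le_max_left _ _).trans (le_max_left _ _)))
  have hb : b ∈ Icc (-M) M := mem_Icc.mpr (abs_le.mp ((le_max_right _ _).trans (le_max_left _ _)))
  rw [uIcc_of_le (by linarith [ha.1, ha.2] : -M ≤ M)]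
  exact uIcc_subset_Icc ha hb

lemma II_g (a b : ℝ) : IntervalIntegrable g volume a b := (II_logabs a b).abs

lemma exp_sub_exp_neg (t : ℝ) :
    Complex.exp ((t:ℂ) * Complex.I) - Complex.exp (((-t : ℝ):ℂ) * Complex.I)
      = 2 * (Real.sin t : ℂ) * Complex.I := by
  rw [Complex.exp_mul_I, Complex.exp_mul_I]
  push_cast
  rw [Complex.cos_neg, Complex.sin_neg]
  ring

lemma abs_exp_sub_one (a : ℝ) :
    ‖Complex.exp ((a:ℂ) * Complex.I) - 1‖ = 2 * |Real.sin (a/2)| := by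
  have key : Complex.exp ((a:ℂ) * Complex.I) - 1
      = Complex.exp (((a/2 : ℝ):ℂ) * Complex.I) *
        (Complex.exp (((a/2 : ℝ):ℂ) * Complex.I) - Complex.exp (((-(a/2) : ℝ):ℂ) * Complex.I)) := by
    rw [mul_sub, ← Complex.exp_add, ← Complex.exp_add]
    push_cast
    ring_nf
    rw [Complex.exp_zero]
    ring
  rw [key, norm_mul, Complex.norm_exp_ofReal_mul_I, one_mul, exp_sub_exp_neg]
  rw [norm_mul, norm_mul, Complex.norm_I, Complex.norm_two, Complex.norm_real, Real.norm_eq_abs, mul_one]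

lemma abs_exp_sub_exp (θ φ : ℝ) :
    ‖Complex.exp ((θ:ℂ) * Complex.I) - Complex.exp ((φ:ℂ) * Complex.I)‖
      = 2 * |Real.sin ((θ - φ)/2)| := by
  have key : Complex.exp ((θ:ℂ) * Complex.I) - Complex.exp ((φ:ℂ) * Complex.I)
      = Complex.exp ((φ:ℂ) * Complex.I) *
        (Complex.exp (((θ - φ : ℝ):ℂ) * Complex.I) - 1) := by
    rw [mul_sub, ← Complex.exp_add, mul_one]
    push_cast
    ring_nf
  rw [key, norm_mul, Complex.norm_exp_ofReal_mul_I, one_mul, abs_exp_sub_one]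

lemma sin_half_lb {s : ℝ} (h0 : 0 ≤ s) (h2 : s ≤ 2*π) :
    s * (2*π - s) / (2*π^2) ≤ Real.sin (s/2) := by
  have hπ := Real.pi_pos
  rw [div_le_iff₀ (by positivity)]
  rcases le_total s π with h | h
  · have hj := Real.mul_le_sin (x := s/2) (by linarith) (by linarith)
    have h' : s ≤ Real.sin (s/2) * π := by
      rw [show 2/π * (s/2) = s * π⁻¹ by ring] at hj
      calc s = s * π⁻¹ * π := by field_simp
        _ ≤ Real.sin (s/2) * π := by
          apply mul_le_mul_of_nonneg_right hj hπ.le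
    nlinarith [sq_nonneg s]
  · have hj := Real.mul_le_sin (x := π - s/2) (by linarith) (by linarith)
    rw [show Real.sin (π - s/2) = Real.sin (s/2) from Real.sin_pi_sub _] at hj
    have h' : 2*π - s ≤ Real.sin (s/2) * π := by
      rw [show 2/π * (π - s/2) = (2*π - s) * π⁻¹ by ring] at hj
      calc 2*π - s = (2*π - s) * π⁻¹ * π := by field_simp
        _ ≤ Real.sin (s/2) * π := by
          apply mul_le_mul_of_nonneg_right hj hπ.le
    nlinarith [sq_nonneg (2*π - s)]


noncomputable def Cst : ℝ := ∫ u in Ioc (-(2*π)) (2*π), g u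


lemma g_IO_big : IntegrableOn g (Ioc (-(2*π)) (2*π)) :=
  (intervalIntegrable_iff_integrableOn_Ioc_of_le (by linarith [pi_pos] : -(2*π) ≤ 2*π)).mp
    (II_g _ _)

lemma int_g_Icc_le {c : ℝ} (hc1 : -(2*π) ≤ c) (hc2 : c ≤ π) :
    ∫ φ in Icc (0:ℝ) π, g (φ + c) ≤ Cst := by
  have h1 : ∫ φ in Icc (0:ℝ) π, g (φ + c) = ∫ φ in Ioc (0:ℝ) π, g (φ + c) :=
    (setIntegral_congr_set Ioc_ae_eq_Icc).symm
  have h2 : ∫ φ in Ioc (0:ℝ) π, g (φ + c) = ∫ φ in (0:ℝ)..π, g (φ + c) :=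
    (intervalIntegral.integral_of_le pi_pos.le).symm
  have h3 : ∫ φ in (0:ℝ)..π, g (φ + c) = ∫ u in (0+c)..(π+c), g u :=
    intervalIntegral.integral_comp_add_right g c
  have h4 : ∫ u in (0+c)..(π+c), g u = ∫ u in Ioc (0+c) (π+c), g u :=
    intervalIntegral.integral_of_le (by linarith [pi_pos])
  rw [h1, h2, h3, h4]
  apply setIntegral_mono_set g_IO_big
    (Filter.Eventually.of_forall fun u => g_nonneg u)
  apply HasSubset.Subset.eventuallyLE
  apply Ioc_subset_Ioc <;> linarith

lemma integrable_g_shift (c : ℝ) :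
    Integrable (fun φ => g (φ + c)) (volume.restrict (Icc (0:ℝ) π)) := by
  have h := (II_g c (π + c)).comp_add_right c
  simp only [sub_self, add_sub_cancel_right] at h
  exact Iff.mpr integrableOn_Icc_iff_integrableOn_Ioc
    ((intervalIntegrable_iff_integrableOn_Ioc_of_le pi_pos.le).mp h)

lemma integrable_g_comp {σ : ℝ → ℝ} (hσ : Measurable σ)
    (hrange : ∀ θ ∈ Icc (0:ℝ) π, σ θ ∈ Icc (-(2*π)) π) :
    Integrable (fun p : ℝ × ℝ => g (p.2 + σ p.1))
      ((volume.restrict (Icc (0:ℝ) π)).prod (volume.restrict (Icc (0:ℝ) π))) := by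
  set μ := volume.restrict (Icc (0:ℝ) π)
  have hmeas : AEStronglyMeasurable (fun p : ℝ × ℝ => g (p.2 + σ p.1)) (μ.prod μ) :=
    (g_meas.comp (measurable_snd.add (hσ.comp measurable_fst))).aestronglyMeasurable
  rw [MeasureTheory.integrable_prod_iff hmeas]
  constructor
  · exact Filter.Eventually.of_forall fun θ => integrable_g_shift (σ θ)
  · haveI : IsFiniteMeasure μ := by
      constructor
      rw [Measure.restrict_apply_univ]
      exact measure_Icc_lt_top
    apply Integrable.mono' (integrable_const Cst) (hmeas.norm.integral_prod_right')
    filter_upwards [ae_restrict_mem measurableSet_Icc] with θ hθ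
    have hpt : ∀ φ : ℝ, ‖g (φ + σ θ)‖ = g (φ + σ θ) := fun φ => Real.norm_of_nonneg (g_nonneg _)
    calc ‖∫ φ, ‖g (φ + σ θ)‖ ∂μ‖ = ∫ φ, g (φ + σ θ) ∂μ := by
          simp only [hpt]
          exact Real.norm_of_nonneg (integral_nonneg fun φ => g_nonneg _)
      _ ≤ Cst := int_g_Icc_le (hrange θ hθ).1 (hrange θ hθ).2







lemma conj_eval (x φ : ℝ) :
    (starRingEnd ℂ) ((x:ℂ) + Complex.exp ((φ:ℂ) * Complex.I))
      = (x:ℂ) + Complex.exp (((-φ : ℝ):ℂ) * Complex.I) := by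
  rw [map_add, Complex.conj_ofReal, ← Complex.exp_conj]
  congr 2
  rw [map_mul, Complex.conj_ofReal, Complex.conj_I]
  push_cast
  ring

section main
variable {x θ φ : ℝ}

lemma hd1 (x θ φ : ℝ) :
    ‖((x:ℂ) + Complex.exp ((θ:ℂ) * Complex.I)) - ((x:ℂ) + Complex.exp ((φ:ℂ) * Complex.I))‖
      = 2 * |Real.sin ((θ - φ)/2)| := by
  rw [show ((x:ℂ) + Complex.exp ((θ:ℂ) * Complex.I)) - ((x:ℂ) + Complex.exp ((φ:ℂ) * Complex.I))
      = Complex.exp ((θ:ℂ) * Complex.I) - Complex.exp ((φ:ℂ) * Complex.I) by ring]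
  exact abs_exp_sub_exp θ φ

lemma hd2 (x θ φ : ℝ) :
    ‖((x:ℂ) + Complex.exp ((θ:ℂ) * Complex.I))
        - (starRingEnd ℂ) ((x:ℂ) + Complex.exp ((φ:ℂ) * Complex.I))‖
      = 2 * |Real.sin ((θ + φ)/2)| := by
  rw [conj_eval, show ((x:ℂ) + Complex.exp ((θ:ℂ) * Complex.I))
      - ((x:ℂ) + Complex.exp (((-φ : ℝ):ℂ) * Complex.I))
      = Complex.exp ((θ:ℂ) * Complex.I) - Complex.exp (((-φ : ℝ):ℂ) * Complex.I) by ring,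
    abs_exp_sub_exp θ (-φ), show θ - -φ = θ + φ by ring]

lemma d1_lb (hθ : θ ∈ Icc 0 π) (hφ : φ ∈ Icc 0 π) :
    |θ - φ| / π ≤ |Real.sin ((θ - φ)/2)| := by
  have hsub : |θ - φ| ≤ π := by
    rw [abs_le]
    constructor <;> [linarith [hθ.1, hφ.2]; linarith [hθ.2, hφ.1]]
  have habs2 : |(θ - φ)/2| ≤ π/2 := by rw [abs_div, abs_two]; linarith
  have h := Real.mul_abs_le_abs_sin habs2
  calc |θ - φ| / π = 2/π * |(θ - φ)/2| := by rw [abs_div, abs_two]; ring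
    _ ≤ _ := h

lemma d_pos (hθ : θ ∈ Icc 0 π) (hφ : φ ∈ Icc 0 π) (h1 : θ ≠ φ) (h2 : θ + φ ≠ 0)
    (h3 : θ + φ ≠ 2*π) :
    0 < 2 * |Real.sin ((θ - φ)/2)| ∧ 0 < 2 * |Real.sin ((θ + φ)/2)| := by
  have hπ := Real.pi_pos
  constructor
  · have hlb := d1_lb hθ hφ
    have hpos : 0 < |θ - φ| := abs_pos.mpr (sub_ne_zero.mpr h1)
    nlinarith [div_pos hpos hπ]
  · have hs0 : 0 < θ + φ := lt_of_le_of_ne (by linarith [hθ.1, hφ.1]) (Ne.symm h2)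
    have hs2 : θ + φ < 2*π := lt_of_le_of_ne (by linarith [hθ.2, hφ.2]) h3
    have hs := sin_half_lb (s := θ+φ) (by linarith) (by linarith)
    have hnum : 0 < (θ+φ) * (2*π - (θ+φ)) / (2*π^2) :=
      div_pos (mul_pos hs0 (by linarith)) (by positivity)
    have hsin : 0 < Real.sin ((θ+φ)/2) := lt_of_lt_of_le hnum hs
    nlinarith [le_abs_self (Real.sin ((θ+φ)/2))]

lemma abs_log_le {d t : ℝ} (h1 : t ≤ d) (h2 : d ≤ π) (ht : 0 < t) :
    |Real.log d| ≤ |Real.log t| + Real.log π := by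
  have hd : 0 < d := lt_of_lt_of_le ht h1
  have hπ1 : 0 ≤ Real.log π := Real.log_nonneg (by linarith [Real.two_le_pi])
  rw [abs_le]
  constructor
  · have hle : Real.log t ≤ Real.log d := Real.log_le_log ht h1
    linarith [neg_abs_le (Real.log t)]
  · have hle : Real.log d ≤ Real.log π := Real.log_le_log hd h2
    linarith [abs_nonneg (Real.log t)]

set_option maxHeartbeats 2000000 in
lemma G_bound {R : ℝ} (hx : |x| ≤ R) (hθ : θ ∈ Icc 0 π) (hφ : φ ∈ Icc 0 π)
    (h1 : θ ≠ φ) (h2 : θ + φ ≠ 0) (h3 : θ + φ ≠ 2*π) :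
    |G ((x:ℂ) + Complex.exp ((θ:ℂ) * Complex.I)) ((x:ℂ) + Complex.exp ((φ:ℂ) * Complex.I))| ≤
      (4*Real.log (R+1) + 5*Real.log π)
        + (g (φ + -θ) + (g (φ + θ) + g (φ + (θ - 2*π)))) := by
  have hπ := Real.pi_pos
  have h2π := Real.two_le_pi
  have hs0 : 0 < θ + φ := lt_of_le_of_ne (by linarith [hθ.1, hφ.1]) (Ne.symm h2)
  have hs2 : θ + φ < 2*π := lt_of_le_of_ne (by linarith [hθ.2, hφ.2]) h3
  obtain ⟨hd1pos, hd2pos⟩ := d_pos hθ hφ h1 h2 h3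
  have habs : 0 < |θ - φ| := abs_pos.mpr (sub_ne_zero.mpr h1)
  have hR0 : 0 ≤ R := le_trans (abs_nonneg x) hx
  -- numerator bounds
  have hvb : ‖(x:ℂ) + Complex.exp ((θ:ℂ) * Complex.I)‖ ≤ R + 1 := by
    calc ‖(x:ℂ) + Complex.exp ((θ:ℂ) * Complex.I)‖
        ≤ ‖(x:ℂ)‖ + ‖Complex.exp ((θ:ℂ) * Complex.I)‖ :=
          norm_add_le _ _
      _ = |x| + 1 := by rw [Complex.norm_real, Real.norm_eq_abs, Complex.norm_exp_ofReal_mul_I]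
      _ ≤ R + 1 := by linarith
  have hwb : ‖(x:ℂ) + Complex.exp ((φ:ℂ) * Complex.I)‖ ≤ R + 1 := by
    calc ‖(x:ℂ) + Complex.exp ((φ:ℂ) * Complex.I)‖
        ≤ ‖(x:ℂ)‖ + ‖Complex.exp ((φ:ℂ) * Complex.I)‖ :=
          norm_add_le _ _
      _ = |x| + 1 := by rw [Complex.norm_real, Real.norm_eq_abs, Complex.norm_exp_ofReal_mul_I]
      _ ≤ R + 1 := by linarith
  set av := max (‖(x:ℂ) + Complex.exp ((θ:ℂ) * Complex.I)‖) 1 with hav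
  set aw := max (‖(x:ℂ) + Complex.exp ((φ:ℂ) * Complex.I)‖) 1 with haw
  have hav1 : 1 ≤ av := le_max_right _ _
  have haw1 : 1 ≤ aw := le_max_right _ _
  have havR : av ≤ R + 1 := max_le hvb (by linarith)
  have hawR : aw ≤ R + 1 := max_le hwb (by linarith)
  have h2v : 1 ≤ av^2 := one_le_pow₀ hav1
  have h2w : 1 ≤ aw^2 := one_le_pow₀ haw1
  have hN1 : 1 ≤ av^2 * aw^2 := by nlinarith
  have hNle : av^2 * aw^2 ≤ (R+1)^4 := by
    have hv2 : av^2 ≤ (R+1)^2 := by nlinarith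
    have hw2 : aw^2 ≤ (R+1)^2 := by nlinarith
    nlinarith
  -- rewrite G
  have hGeq : G ((x:ℂ) + Complex.exp ((θ:ℂ) * Complex.I)) ((x:ℂ) + Complex.exp ((φ:ℂ) * Complex.I))
      = Real.log (av^2 * aw^2) - Real.log (2 * |Real.sin ((θ - φ)/2)|)
        - Real.log (2 * |Real.sin ((θ + φ)/2)|) := by
    rw [G, hd1 x θ φ, hd2 x θ φ, Real.log_div (by nlinarith) (by positivity),
      Real.log_mul (ne_of_gt hd1pos) (ne_of_gt hd2pos)]
    ring
  rw [hGeq]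
  -- log N bounds
  have hlogN0 : 0 ≤ Real.log (av^2 * aw^2) := Real.log_nonneg hN1
  have hlogN : Real.log (av^2 * aw^2) ≤ 4 * Real.log (R+1) := by
    calc Real.log (av^2 * aw^2) ≤ Real.log ((R+1)^4) := Real.log_le_log (by nlinarith) hNle
      _ = 4 * Real.log (R+1) := by rw [Real.log_pow]; norm_num
  -- log d1 bound
  have hlogd1 : |Real.log (2 * |Real.sin ((θ - φ)/2)|)| ≤ g (φ + -θ) + 2 * Real.log π := by
    have ht : (0:ℝ) < |θ - φ| / π := div_pos habs hπ
    have h1' : |θ - φ| / π ≤ 2 * |Real.sin ((θ - φ)/2)| := by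
      have := d1_lb hθ hφ
      nlinarith [abs_nonneg (Real.sin ((θ - φ)/2))]
    have h2' : 2 * |Real.sin ((θ - φ)/2)| ≤ π := by
      have := Real.abs_sin_le_one ((θ - φ)/2)
      linarith
    have key := abs_log_le h1' h2' ht
    have hsplit : |Real.log (|θ - φ| / π)| ≤ g (φ + -θ) + Real.log π := by
      rw [Real.log_div (ne_of_gt habs) (ne_of_gt hπ)]
      have hg : g (φ + -θ) = abs (Real.log (abs (θ - φ))) := by
        rw [g]
        congr 2
        rw [show φ + -θ = -(θ - φ) by ring, abs_neg]
      rw [hg]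
      have hπl : abs (Real.log π) = Real.log π := abs_of_nonneg (Real.log_nonneg (by linarith))
      have t1 := abs_sub (Real.log (abs (θ - φ))) (Real.log π)
      linarith
    linarith
  -- log d2 bound
  have hlogd2 : |Real.log (2 * |Real.sin ((θ + φ)/2)|)| ≤
      (g (φ + θ) + g (φ + (θ - 2*π))) + 3 * Real.log π := by
    set s := θ + φ with hsdef
    have hsin := sin_half_lb (s := s) (by linarith) (by linarith)
    have ht : (0:ℝ) < s * (2*π - s) / π^2 := div_pos (mul_pos hs0 (by linarith)) (by positivity)
    have h1' : s * (2*π - s) / π^2 ≤ 2 * |Real.sin (s/2)| := by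
      have habs' := le_abs_self (Real.sin (s/2))
      have : s * (2*π - s) / π^2 = 2 * (s * (2*π - s) / (2*π^2)) := by ring
      rw [this]
      linarith
    have h2' : 2 * |Real.sin (s/2)| ≤ π := by
      have := Real.abs_sin_le_one (s/2)
      linarith
    have key := abs_log_le h1' h2' ht
    have hsplit : |Real.log (s * (2*π - s) / π^2)| ≤
        (g (φ + θ) + g (φ + (θ - 2*π))) + 2 * Real.log π := by
      rw [Real.log_div (ne_of_gt (mul_pos hs0 (by linarith))) (by positivity),
        Real.log_mul (ne_of_gt hs0) (by linarith), Real.log_pow]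
      have e1 : g (φ + θ) = |Real.log s| := by
        rw [g]
        congr 1
        rw [show φ + θ = s by rw [hsdef]; ring, abs_of_pos hs0]
      have e2 : g (φ + (θ - 2*π)) = |Real.log (2*π - s)| := by
        rw [g]
        congr 1
        rw [show φ + (θ - 2*π) = -(2*π - s) by rw [hsdef]; ring, abs_neg,
          abs_of_pos (by linarith : (0:ℝ) < 2*π - s)]
      rw [e1, e2]
      have hπl : 0 ≤ Real.log π := Real.log_nonneg (by linarith)
      push_cast
      have t1 := abs_sub (Real.log s + Real.log (2*π - s)) ((2:ℝ) * Real.log π)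
      have t2 := abs_add_le (Real.log s) (Real.log (2*π - s))
      have t3 : |(2:ℝ) * Real.log π| = 2 * Real.log π := by
        rw [abs_of_nonneg (by linarith)]
      linarith
    linarith
  -- combine
  have hg1 := g_nonneg (φ + -θ)
  have hg2 := g_nonneg (φ + θ)
  have hg3 := g_nonneg (φ + (θ - 2*π))
  have hb1 := abs_le.mp hlogd1
  have hb2 := abs_le.mp hlogd2
  rw [abs_le]
  constructor <;> linarith

end main

noncomputable def B (R : ℝ) (p : ℝ × ℝ) : ℝ :=
  (4*Real.log (R+1) + 5*Real.log π) + (g (p.2 + -p.1) + (g (p.2 + p.1) + g (p.2 + (p.1 - 2*π))))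

lemma line_null (f : ℝ → ℝ) (hf : Measurable f) :
    ((volume.restrict (Icc (0:ℝ) π)).prod (volume.restrict (Icc (0:ℝ) π)))
      {p : ℝ × ℝ | p.2 = f p.1} = 0 := by
  have hms : MeasurableSet {p : ℝ × ℝ | p.2 = f p.1} :=
    measurableSet_eq_fun measurable_snd (hf.comp measurable_fst)
  rw [Measure.measure_prod_null hms]
  refine Filter.Eventually.of_forall fun θ => ?_
  have hpre : (Prod.mk θ ⁻¹' {p : ℝ × ℝ | p.2 = f p.1}) = {f θ} := by
    ext y; simp [Set.mem_preimage]
  simp only [hpre]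
  rw [Measure.restrict_apply (measurableSet_singleton _)]
  refine le_antisymm ?_ zero_le
  calc volume ({f θ} ∩ Icc 0 π) ≤ volume {f θ} := measure_mono inter_subset_left
    _ = 0 := Real.volume_singleton

lemma ae_good :
    ∀ᵐ p : ℝ × ℝ ∂((volume.restrict (Icc (0:ℝ) π)).prod (volume.restrict (Icc (0:ℝ) π))),
      p.1 ≠ p.2 ∧ p.1 + p.2 ≠ 0 ∧ p.1 + p.2 ≠ 2*π := by
  have h1 := line_null id measurable_id
  have h2 := line_null (fun t => -t) measurable_neg
  have h3 := line_null (fun t => 2*π - t) (measurable_const.sub measurable_id)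
  rw [ae_iff]
  have hsub : {p : ℝ × ℝ | ¬(p.1 ≠ p.2 ∧ p.1 + p.2 ≠ 0 ∧ p.1 + p.2 ≠ 2*π)}
      ⊆ {p : ℝ × ℝ | p.2 = id p.1} ∪ ({p : ℝ × ℝ | p.2 = -p.1}
        ∪ {p : ℝ × ℝ | p.2 = 2*π - p.1}) := ?_
  swap
  · intro p hp
    simp only [Set.mem_setOf_eq, not_and_or, not_not] at hp
    simp only [Set.mem_union, Set.mem_setOf_eq, id]
    rcases hp with h | h | h
    · left; exact h.symm
    · right; left; linarith [h]
    · right; right; linarith [h]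
  · refine measure_mono_null hsub ?_
    rw [measure_union_null_iff]
    refine ⟨h1, ?_⟩
    rw [measure_union_null_iff]
    exact ⟨h2, h3⟩

lemma G_contAt {θ φ : ℝ} (hθ : θ ∈ Icc 0 π) (hφ : φ ∈ Icc 0 π)
    (h1 : θ ≠ φ) (h2 : θ + φ ≠ 0) (h3 : θ + φ ≠ 2*π) (x₀ : ℝ) :
    ContinuousAt (fun x : ℝ =>
      G ((x:ℂ) + Complex.exp ((θ:ℂ) * Complex.I)) ((x:ℂ) + Complex.exp ((φ:ℂ) * Complex.I))) x₀ := by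
  obtain ⟨hd1pos, hd2pos⟩ := d_pos hθ hφ h1 h2 h3
  have hv : Continuous fun x : ℝ => (x:ℂ) + Complex.exp ((θ:ℂ) * Complex.I) :=
    Complex.continuous_ofReal.add continuous_const
  have hw : Continuous fun x : ℝ => (x:ℂ) + Complex.exp ((φ:ℂ) * Complex.I) :=
    Complex.continuous_ofReal.add continuous_const
  set num : ℝ → ℝ := fun x =>
    (max (‖(x:ℂ) + Complex.exp ((θ:ℂ) * Complex.I)‖) 1)^2 *
    (max (‖(x:ℂ) + Complex.exp ((φ:ℂ) * Complex.I)‖) 1)^2 with hnumdef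
  set den : ℝ → ℝ := fun x =>
    ‖((x:ℂ) + Complex.exp ((θ:ℂ) * Complex.I)) - ((x:ℂ) + Complex.exp ((φ:ℂ) * Complex.I))‖ *
    ‖((x:ℂ) + Complex.exp ((θ:ℂ) * Complex.I))
      - (starRingEnd ℂ) ((x:ℂ) + Complex.exp ((φ:ℂ) * Complex.I))‖ with hdendef
  have hnumc : Continuous num :=
    (((continuous_norm.comp hv).max continuous_const).pow 2).mul
      (((continuous_norm.comp hw).max continuous_const).pow 2)
  have hdenc : Continuous den :=
    (continuous_norm.comp (hv.sub hw)).mul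
      (continuous_norm.comp (hv.sub (Complex.continuous_conj.comp hw)))
  have hden_eval : ∀ x : ℝ, den x = (2 * |Real.sin ((θ - φ)/2)|) * (2 * |Real.sin ((θ + φ)/2)|) := by
    intro x
    rw [hdendef]
    simp only
    rw [hd1 x θ φ, hd2 x θ φ]
  have hnum1 : ∀ x : ℝ, 1 ≤ num x := by
    intro x
    rw [hnumdef]
    simp only
    have h2v : 1 ≤ (max (‖(x:ℂ) + Complex.exp ((θ:ℂ) * Complex.I)‖) 1)^2 :=
      one_le_pow₀ (le_max_right _ _)
    have h2w : 1 ≤ (max (‖(x:ℂ) + Complex.exp ((φ:ℂ) * Complex.I)‖) 1)^2 :=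
      one_le_pow₀ (le_max_right _ _)
    nlinarith
  have hdenpos : 0 < den x₀ := by
    rw [hden_eval]
    exact mul_pos hd1pos hd2pos
  have hAcont : ContinuousAt (fun x => num x / den x) x₀ :=
    (hnumc.continuousAt).div (hdenc.continuousAt) (ne_of_gt hdenpos)
  have hApos : 0 < num x₀ / den x₀ :=
    div_pos (lt_of_lt_of_le one_pos (hnum1 x₀)) hdenpos
  exact ContinuousAt.log hAcont (ne_of_gt hApos)

end VarAux

open MeasureTheory Complex

open VarAux Set Real in
/-- For every `x ∈ ℝ`, the double integral
`V(x) := π⁻² ∫₀^π ∫₀^π G(x + e^{iθ}, x + e^{iφ}) dθ dφ` converges absolutely, and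
`x ↦ V(x)` is continuous on `ℝ`. -/
theorem variance_semicircle_average_continuous :
    (∀ x : ℝ, IntegrableOn
      (fun p : ℝ × ℝ =>
        G ((x : ℂ) + Complex.exp (p.1 * Complex.I)) ((x : ℂ) + Complex.exp (p.2 * Complex.I)))
      (Set.Icc 0 Real.pi ×ˢ Set.Icc 0 Real.pi) volume) ∧
    Continuous (fun x : ℝ =>
      (Real.pi ^ 2)⁻¹ * ∫ p in Set.Icc 0 Real.pi ×ˢ Set.Icc 0 Real.pi,
        G ((x : ℂ) + Complex.exp (p.1 * Complex.I)) ((x : ℂ) + Complex.exp (p.2 * Complex.I))) := by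
  set μ := volume.restrict (Icc (0:ℝ) π) with hμ
  haveI : IsFiniteMeasure μ := by
    constructor
    rw [Measure.restrict_apply_univ]
    exact measure_Icc_lt_top
  have hsq : (volume : Measure (ℝ × ℝ)).restrict (Icc 0 π ×ˢ Icc 0 π) = μ.prod μ := by
    rw [hμ, Measure.prod_restrict, ← Measure.volume_eq_prod]
  have hbound_int : ∀ R : ℝ, Integrable (B R) (μ.prod μ) := by
    intro R
    have i1 : Integrable (fun p : ℝ × ℝ => g (p.2 + -p.1)) (μ.prod μ) := by
      rw [hμ]
      refine integrable_g_comp measurable_neg (fun θ hθ => ?_)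
      simp only [mem_Icc, id_eq] at hθ ⊢
      obtain ⟨ha, hb⟩ := hθ
      constructor <;> linarith [pi_pos]
    have i2 : Integrable (fun p : ℝ × ℝ => g (p.2 + p.1)) (μ.prod μ) := by
      rw [hμ]
      refine integrable_g_comp measurable_id (fun θ hθ => ?_)
      simp only [mem_Icc, id_eq] at hθ ⊢
      obtain ⟨ha, hb⟩ := hθ
      constructor <;> linarith [pi_pos]
    have i3 : Integrable (fun p : ℝ × ℝ => g (p.2 + (p.1 - 2*π))) (μ.prod μ) := by
      rw [hμ]
      refine integrable_g_comp (measurable_id.sub measurable_const) (fun θ hθ => ?_)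
      simp only [mem_Icc, id_eq, Pi.sub_apply] at hθ ⊢
      obtain ⟨ha, hb⟩ := hθ
      constructor <;> linarith [pi_pos]
    exact (integrable_const _).add (i1.add (i2.add i3))
  have hFmeas : ∀ x : ℝ, AEStronglyMeasurable
      (fun p : ℝ × ℝ =>
        G ((x : ℂ) + Complex.exp (p.1 * Complex.I)) ((x : ℂ) + Complex.exp (p.2 * Complex.I)))
      (μ.prod μ) := by
    intro x
    have hv : Continuous fun p : ℝ × ℝ => (x:ℂ) + Complex.exp (↑p.1 * Complex.I) :=
      continuous_const.add (Complex.continuous_exp.comp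
        ((Complex.continuous_ofReal.comp continuous_fst).mul continuous_const))
    have hw : Continuous fun p : ℝ × ℝ => (x:ℂ) + Complex.exp (↑p.2 * Complex.I) :=
      continuous_const.add (Complex.continuous_exp.comp
        ((Complex.continuous_ofReal.comp continuous_snd).mul continuous_const))
    have hm : Measurable (fun p : ℝ × ℝ =>
        G ((x : ℂ) + Complex.exp (p.1 * Complex.I)) ((x : ℂ) + Complex.exp (p.2 * Complex.I))) := by
      apply Real.measurable_log.comp
      apply Measurable.div
      · exact ((((continuous_norm.comp hv).max continuous_const).pow 2).mul
          (((continuous_norm.comp hw).max continuous_const).pow 2)).measurable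
      · exact ((continuous_norm.comp (hv.sub hw)).mul
          (continuous_norm.comp (hv.sub (Complex.continuous_conj.comp hw)))).measurable
    exact hm.aestronglyMeasurable
  have hmem : ∀ᵐ p : ℝ × ℝ ∂(μ.prod μ), p ∈ Icc (0:ℝ) π ×ˢ Icc (0:ℝ) π := by
    rw [← hsq]
    exact ae_restrict_mem (measurableSet_Icc.prod measurableSet_Icc)
  have hae : ∀ x R : ℝ, _root_.abs x ≤ R → ∀ᵐ p ∂(μ.prod μ),
      ‖G ((x : ℂ) + Complex.exp (p.1 * Complex.I)) ((x : ℂ) + Complex.exp (p.2 * Complex.I))‖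
        ≤ B R p := by
    intro x R hxR
    have hg := ae_good
    rw [← hμ] at hg
    filter_upwards [hmem, hg] with p hp hgood
    rw [Real.norm_eq_abs]
    exact G_bound hxR hp.1 hp.2 hgood.1 hgood.2.1 hgood.2.2
  constructor
  · intro x
    rw [IntegrableOn, hsq]
    exact (hbound_int (_root_.abs x)).mono' (hFmeas x) (hae x (_root_.abs x) le_rfl)
  · apply continuous_const.mul
    rw [continuous_iff_continuousAt]
    intro x₀
    simp only [hsq]
    apply continuousAt_of_dominated (bound := B (_root_.abs x₀ + 1))
    · exact Filter.Eventually.of_forall hFmeas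
    · filter_upwards [Metric.ball_mem_nhds x₀ one_pos] with x hx
      apply hae
      have hd : _root_.abs (x - x₀) < 1 := by
        rw [← Real.dist_eq]
        exact Metric.mem_ball.mp hx
      have h2 := abs_sub_abs_le_abs_sub x x₀
      linarith
    · exact hbound_int _
    · have hg := ae_good
      rw [← hμ] at hg
      filter_upwards [hmem, hg] with p hp hgood
      exact G_contAt hp.1 hp.2 hgood.1 hgood.2.1 hgood.2.2 x₀
end

section
/- Define G : ℂ → ℂ → ℝ by G(v,w) := log( (max(|v|,1))²·(max(|w|,1))² / ( |v−w|·|v−conj(w)| ) ). Then π⁻² ∫₀^π ∫₀^π G(e^{iθ}, e^{iφ}) dθ dφ = 0. -/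
open MeasureTheory Complex

namespace GreenAux

local notation "π" => Real.pi

/-- `F x = log |sin x|`. -/
noncomputable def F (x : ℝ) : ℝ := Real.log |Real.sin x|

lemma F_pi_sub (x : ℝ) : F (π - x) = F x := by
  simp [F, Real.sin_pi_sub]

lemma F_periodic : Function.Periodic F π := fun x => by
  simp [F, Real.sin_add_pi]

lemma ae_compl {S : Set ℝ} (hS : S.Countable) :
    ∀ᵐ x : ℝ ∂(volume : Measure ℝ), x ∉ S :=
  measure_eq_zero_iff_ae_notMem.1 (hS.measure_zero _)

lemma neg_log_le {x : ℝ} (hx : 0 < x) : -Real.log x ≤ 2 * x ^ (-2⁻¹ : ℝ) := by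
  have h1 : Real.log (x ^ (-2⁻¹ : ℝ)) ≤ x ^ (-2⁻¹ : ℝ) - 1 :=
    Real.log_le_sub_one_of_pos (Real.rpow_pos_of_pos hx _)
  have h2 : Real.log (x ^ (-2⁻¹ : ℝ)) = (-2⁻¹ : ℝ) * Real.log x := Real.log_rpow hx _
  nlinarith [Real.rpow_pos_of_pos hx (-2⁻¹ : ℝ)]

lemma intInt_F_half : IntervalIntegrable F volume 0 (π/2) := by
  have hπ := Real.pi_pos
  have hg : IntervalIntegrable (fun x : ℝ => Real.log 2 + 2 * x ^ (-2⁻¹ : ℝ)) volume 0 (π/2) :=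
    intervalIntegrable_const.add
      ((intervalIntegral.intervalIntegrable_rpow' (by norm_num)).const_mul 2)
  apply hg.mono_fun ((Real.measurable_log.comp Real.measurable_sin.abs).aestronglyMeasurable)
  rw [Set.uIoc_of_le (by positivity)]
  refine (ae_restrict_iff' measurableSet_Ioc).2 (Filter.Eventually.of_forall fun x hx => ?_)
  obtain ⟨hx0, hx2⟩ := hx
  show ‖F x‖ ≤ ‖Real.log 2 + 2 * x ^ (-2⁻¹ : ℝ)‖
  have hsinpos : 0 < Real.sin x :=
    Real.sin_pos_of_pos_of_lt_pi hx0 (lt_of_le_of_lt hx2 (by linarith))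
  have hsle : Real.sin x ≤ 1 := Real.sin_le_one x
  have hlow : x / 2 ≤ Real.sin x := by
    have h1 := Real.mul_le_sin hx0.le hx2
    have h2 : x / 2 ≤ 2 / π * x := by
      rw [div_mul_eq_mul_div, div_le_div_iff₀ (by norm_num) hπ]
      nlinarith [Real.pi_le_four]
    linarith
  have hFx : F x = Real.log (Real.sin x) := by rw [F, abs_of_pos hsinpos]
  have hFnonpos : F x ≤ 0 := by
    rw [hFx]; exact Real.log_nonpos hsinpos.le hsle
  have hrpow : (0:ℝ) ≤ 2 * x ^ (-2⁻¹ : ℝ) := by positivity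
  have hglog : (0:ℝ) ≤ Real.log 2 := Real.log_nonneg one_le_two
  rw [Real.norm_eq_abs, Real.norm_eq_abs, abs_of_nonpos hFnonpos,
    _root_.abs_of_nonneg (by linarith : (0:ℝ) ≤ Real.log 2 + 2 * x ^ (-2⁻¹ : ℝ))]
  have hmon : Real.log (x / 2) ≤ Real.log (Real.sin x) :=
    Real.log_le_log (by positivity) hlow
  have hlogdiv : Real.log (x / 2) = Real.log x - Real.log 2 :=
    Real.log_div (ne_of_gt hx0) two_ne_zero
  have := neg_log_le hx0
  rw [hFx]
  linarith

lemma intInt_F_half' : IntervalIntegrable F volume (π/2) π := by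
  have h := intInt_F_half.comp_sub_left π
  rw [show (fun x => F (π - x)) = F from funext fun x => F_pi_sub x] at h
  have h2 := h.symm
  rwa [show π - π/2 = π/2 by ring, sub_zero] at h2

lemma intInt_F_0pi : IntervalIntegrable F volume 0 π :=
  intInt_F_half.trans intInt_F_half'

lemma intInt_F_neg : IntervalIntegrable F volume (-π) 0 := by
  have h := intInt_F_0pi.comp_add_right π
  rw [show (fun x => F (x + π)) = F from funext fun x => F_periodic x] at h
  rwa [zero_sub, sub_self] at h

lemma intInt_F_full : IntervalIntegrable F volume (-π) π :=
  intInt_F_neg.trans intInt_F_0pi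

lemma intInt_F_sub {a b : ℝ} (ha : a ∈ Set.Icc (-π) π) (hb : b ∈ Set.Icc (-π) π) :
    IntervalIntegrable F volume a b := by
  have hπ := Real.pi_pos
  apply intInt_F_full.mono_set
  rw [Set.uIcc_of_le (by linarith : -π ≤ π)]
  exact Set.uIcc_subset_Icc ha hb

lemma countable_sin_zero : {x : ℝ | Real.sin x = 0}.Countable := by
  apply Set.Countable.mono _ (Set.countable_range fun n : ℤ => (n : ℝ) * π)
  intro x hx
  obtain ⟨n, hn⟩ := Real.sin_eq_zero_iff.1 hx
  exact ⟨n, hn⟩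

lemma countable_cos_zero : {x : ℝ | Real.cos x = 0}.Countable := by
  apply Set.Countable.mono _ (Set.countable_range fun n : ℤ => (2 * (n:ℝ) + 1) * π / 2)
  intro x hx
  obtain ⟨n, hn⟩ := Real.cos_eq_zero_iff.1 hx
  exact ⟨n, by rw [hn]⟩

lemma integral_F_0pi : ∫ x in (0:ℝ)..π, F x = -(π * Real.log 2) := by
  have hπ := Real.pi_pos
  set J := ∫ x in (0:ℝ).. (π/2), F x with hJ
  have hrefl : ∫ x in (π/2)..π, F x = J := by
    have h := intervalIntegral.integral_comp_sub_left (a := 0) (b := π/2) F π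
    simp only [F_pi_sub] at h
    rw [show π - π/2 = π/2 by ring, sub_zero] at h
    exact h.symm
  have hsplit : ∫ x in (0:ℝ)..π, F x = J + J := by
    rw [← intervalIntegral.integral_add_adjacent_intervals intInt_F_half intInt_F_half', hrefl]
  have hdouble : ∫ x in (0:ℝ).. (π/2), F (2*x) = (1/2) * ∫ x in (0:ℝ)..π, F x := by
    have h := intervalIntegral.integral_comp_mul_left (a := 0) (b := π/2) F
      (two_ne_zero (α := ℝ))
    rw [show (2:ℝ)*0 = 0 by ring, show (2:ℝ)*(π/2) = π by ring] at h
    rw [h, smul_eq_mul]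
    norm_num
  have hae : ∫ x in (0:ℝ).. (π/2), F (2*x)
      = ∫ x in (0:ℝ).. (π/2), (Real.log 2 + F x + F (π/2 - x)) := by
    apply intervalIntegral.integral_congr_ae
    filter_upwards [ae_compl (countable_sin_zero.union countable_cos_zero)] with x hx _
    simp only [Set.mem_union, Set.mem_setOf_eq, not_or] at hx
    obtain ⟨hsin, hcos⟩ := hx
    have h1 : |Real.sin (2*x)| = 2 * |Real.sin x| * |Real.cos x| := by
      rw [Real.sin_two_mul, abs_mul, abs_mul]
      norm_num
    rw [show F (2*x) = Real.log |Real.sin (2*x)| from rfl, h1,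
      Real.log_mul (by positivity) (abs_ne_zero.2 hcos),
      Real.log_mul (by norm_num) (abs_ne_zero.2 hsin)]
    rw [show F (π/2 - x) = Real.log |Real.sin (π/2 - x)| from rfl,
      Real.sin_pi_div_two_sub]
    rw [show F x = Real.log |Real.sin x| from rfl]
  have hint2 : IntervalIntegrable (fun x => F (π/2 - x)) volume 0 (π/2) := by
    have h := intInt_F_half.comp_sub_left (π/2)
    have h2 := h.symm
    rwa [show π/2 - π/2 = 0 by ring, sub_zero] at h2
  have hJ2 : ∫ x in (0:ℝ).. (π/2), F (π/2 - x) = J := by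
    have h := intervalIntegral.integral_comp_sub_left (a := 0) (b := π/2) F (π/2)
    rwa [show π/2 - π/2 = 0 by ring, sub_zero] at h
  have hval : ∫ x in (0:ℝ).. (π/2), (Real.log 2 + F x + F (π/2 - x))
      = (π/2) * Real.log 2 + J + J := by
    rw [intervalIntegral.integral_add (intervalIntegrable_const.add intInt_F_half) hint2,
      intervalIntegral.integral_add intervalIntegrable_const intInt_F_half,
      intervalIntegral.integral_const, hJ2]
    simp only [smul_eq_mul]
    ring
  have hfinal : (1/2) * ∫ x in (0:ℝ)..π, F x = (π/2) * Real.log 2 + J + J := by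
    rw [← hdouble, hae, hval]
  rw [hsplit] at hfinal ⊢
  linarith

lemma intInt_comp_affine {c d a b : ℝ} (hc : c ≠ 0)
    (h : IntervalIntegrable F volume (c*a+d) (c*b+d)) :
    IntervalIntegrable (fun x => F (c*x + d)) volume a b := by
  have h1 := h.comp_add_right d
  rw [add_sub_cancel_right, add_sub_cancel_right] at h1
  have h2 := h1.comp_mul_left (c := c)
  rwa [mul_div_cancel_left₀ _ hc, mul_div_cancel_left₀ _ hc] at h2

lemma two_cos_complex (t : ℝ) :
    Complex.exp ((t:ℂ) * Complex.I) + Complex.exp (-((t:ℂ) * Complex.I))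
      = 2 * ((Real.cos t : ℝ) : ℂ) := by
  rw [show -((t:ℂ) * Complex.I) = ((-t : ℝ) : ℂ) * Complex.I by push_cast; ring,
    Complex.exp_mul_I, Complex.exp_mul_I]
  rw [show ((-t : ℝ) : ℂ) = -(t:ℂ) by push_cast; ring, Complex.cos_neg, Complex.sin_neg,
    Complex.ofReal_cos]
  ring

lemma G_eq (θ φ : ℝ) :
    G (Complex.exp ((θ:ℂ) * Complex.I)) (Complex.exp ((φ:ℂ) * Complex.I))
      = -Real.log (2 * |Real.cos θ - Real.cos φ|) := by
  set a := Complex.exp ((θ:ℂ) * Complex.I) with ha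
  set b := Complex.exp ((φ:ℂ) * Complex.I) with hb
  have hva : ‖a‖ = 1 := Complex.norm_exp_ofReal_mul_I θ
  have hvb : ‖b‖ = 1 := Complex.norm_exp_ofReal_mul_I φ
  have hconj : (starRingEnd ℂ) b = Complex.exp (-((φ:ℂ) * Complex.I)) := by
    rw [hb, ← Complex.exp_conj]
    congr 1
    simp [Complex.conj_I]
  have hprod : (a - b) * (a - Complex.exp (-((φ:ℂ) * Complex.I)))
      = a * (((2*Real.cos θ - 2*Real.cos φ : ℝ) : ℂ)) := by
    have h1 := two_cos_complex θ
    have h2 := two_cos_complex φ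
    rw [Complex.exp_neg] at h1 h2 ⊢
    rw [← ha] at h1
    rw [← hb] at h2
    have hane : a ≠ 0 := Complex.exp_ne_zero _
    have hbne : b ≠ 0 := Complex.exp_ne_zero _
    push_cast at h1 h2 ⊢
    field_simp at h1 h2 ⊢
    linear_combination b * h1 - a * h2
  have habs : ‖a - b‖ * ‖a - (starRingEnd ℂ) b‖
      = |2*Real.cos θ - 2*Real.cos φ| := by
    rw [hconj, ← norm_mul, hprod, norm_mul, hva, one_mul, Complex.norm_real, Real.norm_eq_abs]
  rw [G, hva, hvb, habs]
  rw [max_self, one_pow, one_mul, show (1:ℝ) / |2*Real.cos θ - 2*Real.cos φ|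
      = (|2*Real.cos θ - 2*Real.cos φ|)⁻¹ from one_div _, Real.log_inv]
  rw [show (2:ℝ)*Real.cos θ - 2*Real.cos φ = 2*(Real.cos θ - Real.cos φ) by ring,
    abs_mul]
  norm_num

lemma inner_eq_zero {θ : ℝ} (hθ : θ ∈ Set.Icc 0 π) :
    ∫ φ in (0:ℝ)..π, G (Complex.exp ((θ:ℂ) * Complex.I)) (Complex.exp ((φ:ℂ) * Complex.I)) = 0 := by
  obtain ⟨hθ0, hθπ⟩ := hθ
  have hπ := Real.pi_pos
  -- integrability of the two shifted pieces
  have m1 : (1/2:ℝ)*0 + θ/2 ∈ Set.Icc (-π) π := by rw [Set.mem_Icc]; constructor <;> nlinarith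
  have m2 : (1/2:ℝ)*π + θ/2 ∈ Set.Icc (-π) π := by rw [Set.mem_Icc]; constructor <;> nlinarith
  have m3 : (-1/2:ℝ)*0 + θ/2 ∈ Set.Icc (-π) π := by rw [Set.mem_Icc]; constructor <;> nlinarith
  have m4 : (-1/2:ℝ)*π + θ/2 ∈ Set.Icc (-π) π := by rw [Set.mem_Icc]; constructor <;> nlinarith
  have hg1 : IntervalIntegrable (fun φ => F ((θ+φ)/2)) volume 0 π := by
    have h := intInt_comp_affine (c := (1/2:ℝ)) (d := θ/2) (a := 0) (b := π)
      (by norm_num) (intInt_F_sub m1 m2)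
    rwa [show (fun x => F ((1/2:ℝ)*x + θ/2)) = (fun φ => F ((θ+φ)/2)) from
      funext fun x => by rw [show (1/2:ℝ)*x + θ/2 = (θ+x)/2 by ring]] at h
  have hg2 : IntervalIntegrable (fun φ => F ((θ-φ)/2)) volume 0 π := by
    have h := intInt_comp_affine (c := (-1/2:ℝ)) (d := θ/2) (a := 0) (b := π)
      (by norm_num) (intInt_F_sub m3 m4)
    rwa [show (fun x => F ((-1/2:ℝ)*x + θ/2)) = (fun φ => F ((θ-φ)/2)) from
      funext fun x => by rw [show (-1/2:ℝ)*x + θ/2 = (θ-x)/2 by ring]] at h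
  -- a.e. rewriting of the integrand
  have hbad1 : {φ : ℝ | Real.sin ((θ+φ)/2) = 0}.Countable := by
    apply Set.Countable.mono _ (Set.countable_range fun n : ℤ => 2*(n:ℝ)*π - θ)
    intro φ hφ
    obtain ⟨n, hn⟩ := Real.sin_eq_zero_iff.1 hφ
    exact ⟨n, by show 2*(n:ℝ)*π - θ = φ; linarith⟩
  have hbad2 : {φ : ℝ | Real.sin ((θ-φ)/2) = 0}.Countable := by
    apply Set.Countable.mono _ (Set.countable_range fun n : ℤ => θ - 2*(n:ℝ)*π)
    intro φ hφ
    obtain ⟨n, hn⟩ := Real.sin_eq_zero_iff.1 hφ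
    exact ⟨n, by show θ - 2*(n:ℝ)*π = φ; linarith⟩
  have hae : ∀ᵐ φ ∂(volume : Measure ℝ), φ ∈ Set.uIoc (0:ℝ) π →
      G (Complex.exp ((θ:ℂ) * Complex.I)) (Complex.exp ((φ:ℂ) * Complex.I))
        = -(2*Real.log 2 + F ((θ+φ)/2) + F ((θ-φ)/2)) := by
    filter_upwards [ae_compl (hbad1.union hbad2)] with φ hφ _
    simp only [Set.mem_union, Set.mem_setOf_eq, not_or] at hφ
    obtain ⟨hs1, hs2⟩ := hφ
    rw [G_eq]
    rw [Real.cos_sub_cos]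
    rw [show |(-2) * Real.sin ((θ+φ)/2) * Real.sin ((θ-φ)/2)|
        = 2 * |Real.sin ((θ+φ)/2)| * |Real.sin ((θ-φ)/2)| by
      rw [abs_mul, abs_mul, abs_neg]
      norm_num]
    rw [show (2:ℝ) * (2 * |Real.sin ((θ+φ)/2)| * |Real.sin ((θ-φ)/2)|)
        = (2*2) * |Real.sin ((θ+φ)/2)| * |Real.sin ((θ-φ)/2)| by ring]
    rw [Real.log_mul (by positivity) (abs_ne_zero.2 hs2),
      Real.log_mul (by norm_num) (abs_ne_zero.2 hs1),
      Real.log_mul (by norm_num : (2:ℝ) ≠ 0) (by norm_num : (2:ℝ) ≠ 0)]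
    rw [show F ((θ+φ)/2) = Real.log |Real.sin ((θ+φ)/2)| from rfl,
      show F ((θ-φ)/2) = Real.log |Real.sin ((θ-φ)/2)| from rfl]
    ring
  rw [intervalIntegral.integral_congr_ae hae]
  -- compute the integral of the rewritten integrand
  have hI1 : ∫ φ in (0:ℝ)..π, F ((θ+φ)/2) = 2 * ∫ u in (θ/2)..((θ+π)/2), F u := by
    have h := intervalIntegral.integral_comp_mul_add (a := 0) (b := π) F
      (c := (1/2:ℝ)) (by norm_num) (θ/2)
    rw [show (fun x => F ((1/2:ℝ)*x + θ/2)) = (fun φ => F ((θ+φ)/2)) from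
      funext fun x => by rw [show (1/2:ℝ)*x + θ/2 = (θ+x)/2 by ring]] at h
    rw [show (1/2:ℝ)*0 + θ/2 = θ/2 by ring, show (1/2:ℝ)*π + θ/2 = (θ+π)/2 by ring] at h
    rw [h, smul_eq_mul]
    norm_num
  have hI2 : ∫ φ in (0:ℝ)..π, F ((θ-φ)/2) = 2 * ∫ u in ((θ-π)/2)..(θ/2), F u := by
    have h := intervalIntegral.integral_comp_mul_add (a := 0) (b := π) F
      (c := (-1/2:ℝ)) (by norm_num) (θ/2)
    rw [show (fun x => F ((-1/2:ℝ)*x + θ/2)) = (fun φ => F ((θ-φ)/2)) from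
      funext fun x => by rw [show (-1/2:ℝ)*x + θ/2 = (θ-x)/2 by ring]] at h
    rw [show (-1/2:ℝ)*0 + θ/2 = θ/2 by ring, show (-1/2:ℝ)*π + θ/2 = (θ-π)/2 by ring] at h
    rw [h, smul_eq_mul, intervalIntegral.integral_symm]
    norm_num
  have madj1 : (θ-π)/2 ∈ Set.Icc (-π) π := by rw [Set.mem_Icc]; constructor <;> nlinarith
  have madj2 : θ/2 ∈ Set.Icc (-π) π := by rw [Set.mem_Icc]; constructor <;> nlinarith
  have madj3 : (θ+π)/2 ∈ Set.Icc (-π) π := by rw [Set.mem_Icc]; constructor <;> nlinarith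
  have hadj : (∫ u in ((θ-π)/2)..(θ/2), F u) + ∫ u in (θ/2)..((θ+π)/2), F u
      = ∫ u in ((θ-π)/2)..((θ+π)/2), F u :=
    intervalIntegral.integral_add_adjacent_intervals
      (intInt_F_sub madj1 madj2) (intInt_F_sub madj2 madj3)
  have hper : ∫ u in ((θ-π)/2)..((θ+π)/2), F u = ∫ u in (0:ℝ)..π, F u := by
    have h := F_periodic.intervalIntegral_add_eq ((θ-π)/2) 0
    rwa [show (θ-π)/2 + π = (θ+π)/2 by ring, zero_add] at h
  have hF0pi := integral_F_0pi
  rw [intervalIntegral.integral_neg,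
    intervalIntegral.integral_add (intervalIntegrable_const.add hg1) hg2,
    intervalIntegral.integral_add intervalIntegrable_const hg1,
    intervalIntegral.integral_const, hI1, hI2]
  rw [smul_eq_mul]
  have : (∫ u in ((θ-π)/2)..(θ/2), F u) + ∫ u in (θ/2)..((θ+π)/2), F u = -(π * Real.log 2) := by
    rw [hadj, hper, hF0pi]
  nlinarith [this]

end GreenAux

/-- The double average of `G` over the unit semicircle vanishes:
`π⁻² ∫₀^π ∫₀^π G(e^{iθ}, e^{iφ}) dθ dφ = 0`. -/
theorem double_average_G_unit_semicircle :
    (Real.pi ^ 2)⁻¹ *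
      ∫ θ in (0 : ℝ)..Real.pi, ∫ φ in (0 : ℝ)..Real.pi,
        G (Complex.exp (θ * Complex.I)) (Complex.exp (φ * Complex.I)) = 0 := by
  have hπ := Real.pi_pos
  have h : ∫ θ in (0 : ℝ)..Real.pi, ∫ φ in (0 : ℝ)..Real.pi,
      G (Complex.exp (θ * Complex.I)) (Complex.exp (φ * Complex.I))
        = ∫ θ in (0 : ℝ)..Real.pi, (0:ℝ) := by
    apply intervalIntegral.integral_congr
    intro θ hθ
    rw [Set.uIcc_of_le hπ.le] at hθ
    exact GreenAux.inner_eq_zero hθ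
  rw [h, intervalIntegral.integral_zero, mul_zero]
end

section
/- Define G : ℂ → ℂ → ℝ by G(v,w) := log( (max(|v|,1))²·(max(|w|,1))² / ( |v−w|·|v−conj(w)| ) ). Then for every r ∈ (0,1], one has π⁻² ∫₀^π ∫₀^π G(r·e^{iθ}, r·e^{iφ}) dθ dφ = 2·log(1/r). -/
open MeasureTheory Complex

private lemma II_log01 : IntervalIntegrable Real.log volume 0 1 := by
  have h : IntervalIntegrable (fun x : ℝ => -Real.log x) volume 0 1 := by
    apply intervalIntegral.intervalIntegrable_deriv_of_nonneg
      (g := fun x : ℝ => x - x * Real.log x)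
    · exact (continuous_id.sub Real.continuous_mul_log).continuousOn
    · intro x hx
      rw [min_def, max_def] at hx
      simp only [zero_le_one, if_pos] at hx
      have hx0 : x ≠ 0 := ne_of_gt hx.1
      have := (hasDerivAt_id x).sub (Real.hasDerivAt_mul_log hx0)
      exact this.congr_deriv (by ring)
    · intro x hx
      rw [min_def, max_def] at hx
      simp only [zero_le_one, if_pos] at hx
      simp only [neg_nonneg]
      exact Real.log_nonpos hx.1.le hx.2.le
  have := h.neg
  simpa only [neg_neg] using (by simpa [Pi.neg_def] using this : IntervalIntegrable (fun x : ℝ => Real.log x) volume 0 1)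

noncomputable def L (u : ℝ) : ℝ := Real.log |Real.sin u|

private lemma L_neg (x : ℝ) : L (-x) = L x := by simp [L]

private lemma L_pi_sub (x : ℝ) : L (Real.pi - x) = L x := by simp [L, Real.sin_pi_sub]

private lemma L_meas : Measurable L :=
  Real.measurable_log.comp (Real.continuous_sin.measurable.abs)

private lemma II_L_half : IntervalIntegrable L volume 0 (Real.pi / 2) := by
  have hpi := Real.pi_pos
  have hbound : IntervalIntegrable (fun x : ℝ => |Real.log x| + Real.log (Real.pi / 2))
      volume 0 (Real.pi / 2) := by
    have h1 : IntervalIntegrable Real.log volume 0 (Real.pi / 2) := by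
      refine II_log01.trans (intervalIntegral.intervalIntegrable_log ?_)
      intro h
      rw [Set.mem_uIcc] at h
      rcases h with h | h
      · linarith [h.1, Real.pi_gt_three]
      · linarith [h.2]
    exact h1.abs.add intervalIntegrable_const
  refine hbound.mono_fun L_meas.aestronglyMeasurable ?_
  have hsub : Set.uIoc (0:ℝ) (Real.pi/2) = Set.Ioc 0 (Real.pi/2) := by
    rw [Set.uIoc_of_le (by linarith)]
  rw [Filter.EventuallyLE, ae_restrict_iff' measurableSet_uIoc]
  refine Filter.Eventually.of_forall (fun x hx => ?_)
  rw [hsub] at hx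
  have hx0 : 0 < x := hx.1
  have hx2 : x ≤ Real.pi / 2 := hx.2
  have hs0 : 0 < Real.sin x := Real.sin_pos_of_pos_of_lt_pi hx0 (by linarith)
  have habs : |Real.sin x| = Real.sin x := abs_of_pos hs0
  have hup : L x ≤ Real.log x := by
    rw [L, habs]
    exact Real.log_le_log hs0 (Real.sin_le hx0.le)
  have hlo : Real.log x - Real.log (Real.pi / 2) ≤ L x := by
    rw [L, habs]
    have h1 : 0 < 2 / Real.pi * x := by positivity
    have h2 : Real.log (2 / Real.pi * x) ≤ Real.log (Real.sin x) :=
      Real.log_le_log h1 (Real.mul_le_sin hx0.le hx2)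
    have h3 : Real.log (2 / Real.pi * x) = Real.log x - Real.log (Real.pi / 2) := by
      rw [Real.log_mul (by positivity) (ne_of_gt hx0)]
      have : (2 : ℝ) / Real.pi = (Real.pi / 2)⁻¹ := by field_simp
      rw [this, Real.log_inv]; ring
    linarith [h3 ▸ h2]
  have hlog2 : 0 ≤ Real.log (Real.pi / 2) :=
    Real.log_nonneg (by linarith [Real.pi_gt_three])
  have : |L x| ≤ |Real.log x| + Real.log (Real.pi / 2) := by
    rw [abs_le]
    constructor
    · have := neg_abs_le (Real.log x); linarith
    · have := le_abs_self (Real.log x); linarith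
  rw [Real.norm_eq_abs, Real.norm_eq_abs,
    _root_.abs_of_nonneg (by positivity : (0:ℝ) ≤ |Real.log x| + Real.log (Real.pi/2))]
  exact this

private lemma II_L_refl : IntervalIntegrable L volume (Real.pi / 2) Real.pi := by
  have h := II_L_half.comp_sub_left Real.pi
  have he : (fun x => L (Real.pi - x)) = L := funext L_pi_sub
  rw [he] at h
  rw [show Real.pi - Real.pi / 2 = Real.pi / 2 by ring, sub_zero] at h
  exact h.symm

private lemma II_L_pi : IntervalIntegrable L volume 0 Real.pi :=
  II_L_half.trans II_L_refl

private lemma II_L_neg : IntervalIntegrable L volume (-Real.pi) 0 := by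
  have h := ((IntervalIntegrable.iff_comp_neg (a := 0) (b := Real.pi) (f := L)).mp II_L_pi)
  have he : (fun x => L (-x)) = L := funext L_neg
  rw [he] at h
  simpa using h.symm

private lemma II_L : IntervalIntegrable L volume (-Real.pi) Real.pi :=
  II_L_neg.trans II_L_pi

private lemma II_L' {a b : ℝ} (ha : Set.uIcc a b ⊆ Set.uIcc (-Real.pi) Real.pi) :
    IntervalIntegrable L volume a b :=
  II_L.mono_set ha

private lemma ae_notin {s : Set ℝ} (hs : s.Finite) : ∀ᵐ x : ℝ, x ∉ s := by
  rw [ae_iff]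
  simpa using hs.measure_zero volume

private lemma int_L_refl : ∫ x in (Real.pi/2)..Real.pi, L x = ∫ x in (0:ℝ)..(Real.pi/2), L x := by
  have he : (fun x => L (Real.pi - x)) = L := funext L_pi_sub
  have h := intervalIntegral.integral_comp_sub_left (a := Real.pi/2) (b := Real.pi) L Real.pi
  rw [he] at h
  rw [h, show Real.pi - Real.pi = 0 by ring, show Real.pi - Real.pi / 2 = Real.pi / 2 by ring]

private lemma int_L_pi : ∫ x in (0:ℝ)..Real.pi, L x = 2 * ∫ x in (0:ℝ)..(Real.pi/2), L x := by
  rw [← intervalIntegral.integral_add_adjacent_intervals II_L_half II_L_refl, int_L_refl]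
  ring

private lemma J_value : ∫ x in (0:ℝ)..(Real.pi/2), L x = -(Real.pi/2) * Real.log 2 := by
  have hpi := Real.pi_pos
  set J := ∫ x in (0:ℝ)..(Real.pi/2), L x with hJ
  -- ∫ L(π/2 - x) = J
  have h1 : ∫ x in (0:ℝ)..(Real.pi/2), L (Real.pi/2 - x) = J := by
    rw [intervalIntegral.integral_comp_sub_left L (Real.pi/2)]
    rw [show Real.pi/2 - Real.pi/2 = 0 by ring, sub_zero]
  -- ∫ L(2x) over 0..π/2 = J
  have h2 : ∫ x in (0:ℝ)..(Real.pi/2), L (2 * x) = J := by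
    rw [intervalIntegral.integral_comp_mul_left L (two_ne_zero)]
    rw [mul_zero, show (2:ℝ) * (Real.pi/2) = Real.pi by ring, int_L_pi]
    simp
    exact hJ.symm
  -- integrabilities
  have hIa : IntervalIntegrable L volume 0 (Real.pi/2) := II_L_half
  have hIb : IntervalIntegrable (fun x => L (Real.pi/2 - x)) volume 0 (Real.pi/2) := by
    have := II_L_half.comp_sub_left (Real.pi/2)
    rw [show Real.pi/2 - 0 = Real.pi/2 by ring, show Real.pi/2 - Real.pi/2 = 0 by ring] at this
    exact this.symm
  have hIc : IntervalIntegrable (fun x => L (2 * x)) volume 0 (Real.pi/2) := by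
    have := II_L_pi.comp_mul_left (c := 2)
    rw [zero_div, show Real.pi / 2 = Real.pi / 2 from rfl] at this
    exact this
  -- a.e. identity L x + L(π/2 - x) = L (2x) - log 2 on uIoc 0 (π/2)
  have hae : ∀ᵐ x : ℝ, x ∈ Set.uIoc (0:ℝ) (Real.pi/2) →
      L x + L (Real.pi/2 - x) = L (2*x) - Real.log 2 := by
    filter_upwards [ae_notin (s := {(0:ℝ), Real.pi/2}) ((Set.finite_singleton (Real.pi/2)).insert 0)]
      with x hx hmem
    have hx0 : x ≠ 0 := fun h => hx (by simp [h])
    have hx2 : x ≠ Real.pi/2 := fun h => hx (by simp [h])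
    rw [Set.uIoc_of_le (by linarith)] at hmem
    have hxpos : 0 < x := lt_of_le_of_ne hmem.1.le (Ne.symm hx0)
    have hxlt : x < Real.pi/2 := lt_of_le_of_ne hmem.2 hx2
    have hs : Real.sin x ≠ 0 :=
      ne_of_gt (Real.sin_pos_of_pos_of_lt_pi hxpos (by linarith))
    have hc : Real.cos x ≠ 0 :=
      ne_of_gt (Real.cos_pos_of_mem_Ioo ⟨by linarith, hxlt⟩)
    have hsin2 : Real.sin (2*x) = 2 * Real.sin x * Real.cos x := Real.sin_two_mul x
    simp only [L]
    rw [show Real.pi/2 - x = Real.pi/2 - x from rfl]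
    have hcos : |Real.sin (Real.pi/2 - x)| = |Real.cos x| := by
      rw [Real.sin_pi_div_two_sub]
    rw [hcos, hsin2]
    rw [abs_mul, abs_mul, Real.log_mul (by positivity) (abs_ne_zero.mpr hc),
      Real.log_mul (by norm_num) (abs_ne_zero.mpr hs), _root_.abs_two]
    ring
  have key : J + J = J - (Real.pi/2) * Real.log 2 := by
    calc J + J = ∫ x in (0:ℝ)..(Real.pi/2), (L x + L (Real.pi/2 - x)) := by
          rw [intervalIntegral.integral_add hIa hIb, h1]
      _ = ∫ x in (0:ℝ)..(Real.pi/2), (L (2*x) - Real.log 2) :=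
          intervalIntegral.integral_congr_ae hae
      _ = (∫ x in (0:ℝ)..(Real.pi/2), L (2*x)) - ∫ x in (0:ℝ)..(Real.pi/2), (Real.log 2 : ℝ) :=
          intervalIntegral.integral_sub hIc intervalIntegrable_const
      _ = J - (Real.pi/2) * Real.log 2 := by
          rw [h2, intervalIntegral.integral_const, smul_eq_mul, sub_zero]
  linarith

private lemma exp_sub_exp_neg (z : ℂ) :
    Complex.exp (z * Complex.I) - Complex.exp (-z * Complex.I) = 2 * Complex.sin z * Complex.I := by
  rw [Complex.sin]
  linear_combination (Complex.exp (z * Complex.I) - Complex.exp (-z * Complex.I)) * Complex.I_sq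

private lemma abs_exp_sub_exp (x y : ℝ) :
    ‖Complex.exp (x * Complex.I) - Complex.exp (y * Complex.I)‖
      = 2 * |Real.sin ((x - y) / 2)| := by
  have key : Complex.exp ((x:ℂ) * Complex.I) - Complex.exp ((y:ℂ) * Complex.I)
      = Complex.exp ((((x + y) / 2 : ℝ) : ℂ) * Complex.I)
        * (2 * Complex.sin ((((x - y) / 2 : ℝ) : ℂ)) * Complex.I) := by
    rw [← exp_sub_exp_neg, mul_sub, ← Complex.exp_add, ← Complex.exp_add]
    push_cast
    ring_nf
  rw [key, norm_mul, Complex.norm_exp_ofReal_mul_I, one_mul, norm_mul, norm_mul,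
    Complex.norm_two, Complex.norm_I, mul_one, ← Complex.ofReal_sin, Complex.norm_real, Real.norm_eq_abs]

private lemma memUI {x : ℝ} (h1 : -Real.pi ≤ x) (h2 : x ≤ Real.pi) :
    x ∈ Set.uIcc (-Real.pi) Real.pi := by
  rw [Set.uIcc_of_le (by linarith [Real.pi_pos])]
  exact ⟨h1, h2⟩

private lemma II_L2 {a b : ℝ} (ha1 : -Real.pi ≤ a) (ha2 : a ≤ Real.pi)
    (hb1 : -Real.pi ≤ b) (hb2 : b ≤ Real.pi) : IntervalIntegrable L volume a b :=
  II_L' (Set.uIcc_subset_uIcc (memUI ha1 ha2) (memUI hb1 hb2))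

private lemma G_eval (r : ℝ) (hr0 : 0 < r) (hr1 : r ≤ 1) {θ φ : ℝ}
    (hs1 : Real.sin ((θ - φ) / 2) ≠ 0) (hs2 : Real.sin ((θ + φ) / 2) ≠ 0) :
    G ((r : ℂ) * Complex.exp (θ * Complex.I)) ((r : ℂ) * Complex.exp (φ * Complex.I))
      = -(2 * Real.log (2 * r)) - L ((θ - φ) / 2) - L ((θ + φ) / 2) := by
  have habs1 : |Real.sin ((θ - φ) / 2)| ≠ 0 := abs_ne_zero.mpr hs1
  have habs2 : |Real.sin ((θ + φ) / 2)| ≠ 0 := abs_ne_zero.mpr hs2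
  have hvr : ‖(r : ℂ) * Complex.exp (θ * Complex.I)‖ = r := by
    rw [norm_mul, Complex.norm_real, Real.norm_eq_abs, Complex.norm_exp_ofReal_mul_I, mul_one, abs_of_pos hr0]
  have hwr : ‖(r : ℂ) * Complex.exp (φ * Complex.I)‖ = r := by
    rw [norm_mul, Complex.norm_real, Real.norm_eq_abs, Complex.norm_exp_ofReal_mul_I, mul_one, abs_of_pos hr0]
  have hvw : ‖(r : ℂ) * Complex.exp (θ * Complex.I)
      - (r : ℂ) * Complex.exp (φ * Complex.I)‖ = r * (2 * |Real.sin ((θ - φ) / 2)|) := by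
    rw [← mul_sub, norm_mul, Complex.norm_real, Real.norm_eq_abs, abs_of_pos hr0, abs_exp_sub_exp]
  have hconj : (starRingEnd ℂ) ((r : ℂ) * Complex.exp (φ * Complex.I))
      = (r : ℂ) * Complex.exp ((-φ : ℝ) * Complex.I) := by
    rw [map_mul, Complex.conj_ofReal, ← Complex.exp_conj]
    congr 1
    rw [map_mul, Complex.conj_ofReal, Complex.conj_I]
    push_cast
    ring_nf
  have hvw2 : ‖(r : ℂ) * Complex.exp (θ * Complex.I)
      - (starRingEnd ℂ) ((r : ℂ) * Complex.exp (φ * Complex.I))‖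
      = r * (2 * |Real.sin ((θ + φ) / 2)|) := by
    rw [hconj, ← mul_sub, norm_mul, Complex.norm_real, Real.norm_eq_abs, abs_of_pos hr0, abs_exp_sub_exp]
    rw [show (θ - -φ) / 2 = (θ + φ) / 2 by ring]
  simp only [G]
  rw [hvr, hwr, hvw, hvw2, max_eq_right hr1, one_pow, one_mul, one_div, Real.log_inv]
  rw [Real.log_mul (by positivity) (by positivity),
    Real.log_mul (ne_of_gt hr0) (by positivity),
    Real.log_mul (ne_of_gt hr0) (by positivity),
    Real.log_mul (two_ne_zero) habs1,
    Real.log_mul (two_ne_zero) habs2,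
    Real.log_mul (two_ne_zero) (ne_of_gt hr0)]
  simp only [L]
  ring

private lemma PQ_value {φ : ℝ} (hφ0 : 0 ≤ φ) (hφπ : φ ≤ Real.pi) :
    (∫ x in (-(φ/2))..((Real.pi - φ)/2), L x) + ∫ x in (φ/2)..((Real.pi + φ)/2), L x
      = -Real.pi * Real.log 2 := by
  have hπ := Real.pi_pos
  have hP : (∫ x in (-(φ/2))..((Real.pi - φ)/2), L x)
      = (∫ x in (0:ℝ)..(φ/2), L x) + ∫ x in (0:ℝ)..((Real.pi - φ)/2), L x := by
    rw [← intervalIntegral.integral_add_adjacent_intervals (b := (0:ℝ))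
      (II_L2 (by linarith) (by linarith) (by linarith) (by linarith))
      (II_L2 (by linarith) (by linarith) (by linarith) (by linarith))]
    congr 1
    have h := intervalIntegral.integral_comp_neg (a := (0:ℝ)) (b := φ/2) (f := L)
    rw [funext L_neg] at h
    rw [neg_zero] at h
    exact h.symm
  have hQ : (∫ x in (φ/2)..((Real.pi + φ)/2), L x)
      = (∫ x in (φ/2)..(Real.pi/2), L x) + ∫ x in ((Real.pi - φ)/2)..(Real.pi/2), L x := by
    rw [← intervalIntegral.integral_add_adjacent_intervals (b := Real.pi/2)
      (II_L2 (by linarith) (by linarith) (by linarith) (by linarith))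
      (II_L2 (by linarith) (by linarith) (by linarith) (by linarith))]
    congr 1
    have h := intervalIntegral.integral_comp_sub_left (a := Real.pi/2) (b := (Real.pi + φ)/2)
      (f := L) Real.pi
    rw [funext L_pi_sub] at h
    rw [h, show Real.pi - (Real.pi + φ)/2 = (Real.pi - φ)/2 by ring,
      show Real.pi - Real.pi/2 = Real.pi/2 by ring]
  have h1 : (∫ x in (0:ℝ)..(φ/2), L x) + ∫ x in (φ/2)..(Real.pi/2), L x
      = ∫ x in (0:ℝ)..(Real.pi/2), L x :=
    intervalIntegral.integral_add_adjacent_intervals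
      (II_L2 (by linarith) (by linarith) (by linarith) (by linarith))
      (II_L2 (by linarith) (by linarith) (by linarith) (by linarith))
  have h2 : (∫ x in (0:ℝ)..((Real.pi - φ)/2), L x) + ∫ x in ((Real.pi - φ)/2)..(Real.pi/2), L x
      = ∫ x in (0:ℝ)..(Real.pi/2), L x :=
    intervalIntegral.integral_add_adjacent_intervals
      (II_L2 (by linarith) (by linarith) (by linarith) (by linarith))
      (II_L2 (by linarith) (by linarith) (by linarith) (by linarith))
  have := J_value
  rw [hP, hQ]
  linarith

private lemma inner_integral (r : ℝ) (hr0 : 0 < r) (hr1 : r ≤ 1) {φ : ℝ}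
    (hφ0 : 0 ≤ φ) (hφπ : φ ≤ Real.pi) :
    (∫ θ in (0:ℝ)..Real.pi,
        G ((r : ℂ) * Complex.exp (θ * Complex.I)) ((r : ℂ) * Complex.exp (φ * Complex.I)))
      = -2 * Real.pi * Real.log r := by
  have hπ := Real.pi_pos
  set F : ℝ → ℝ := fun θ => -(2 * Real.log (2 * r)) - L ((θ - φ) / 2) - L ((θ + φ) / 2) with hF
  -- a.e. equality of integrands
  have hcongr : (∫ θ in (0:ℝ)..Real.pi,
      G ((r : ℂ) * Complex.exp (θ * Complex.I)) ((r : ℂ) * Complex.exp (φ * Complex.I)))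
      = ∫ θ in (0:ℝ)..Real.pi, F θ := by
    apply intervalIntegral.integral_congr_ae
    filter_upwards [ae_notin (s := {φ, Real.pi}) ((Set.finite_singleton Real.pi).insert φ)]
      with θ hθ hmem
    have hθφ : θ ≠ φ := fun h => hθ (by simp [h])
    have hθπ : θ ≠ Real.pi := fun h => hθ (by simp [h])
    rw [Set.uIoc_of_le (by linarith)] at hmem
    have hθ0 : 0 < θ := hmem.1
    have hθπ' : θ < Real.pi := lt_of_le_of_ne hmem.2 hθπ
    have hs1 : Real.sin ((θ - φ) / 2) ≠ 0 := by
      intro h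
      rw [Real.sin_eq_zero_iff_of_lt_of_lt (by linarith) (by linarith)] at h
      exact hθφ (by linarith)
    have hs2 : Real.sin ((θ + φ) / 2) ≠ 0 :=
      ne_of_gt (Real.sin_pos_of_pos_of_lt_pi (by linarith) (by linarith))
    exact G_eval r hr0 hr1 hs1 hs2
  -- integrability of the two L pieces
  have base1 : IntervalIntegrable (fun x : ℝ => L (x * 2⁻¹)) volume (-φ) (Real.pi - φ) := by
    have h := (II_L2 (a := -(φ/2)) (b := (Real.pi - φ)/2)
      (by linarith) (by linarith) (by linarith) (by linarith)).comp_mul_right (c := 2⁻¹)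
    rw [show -(φ/2) / 2⁻¹ = -φ by ring, show (Real.pi - φ)/2 / 2⁻¹ = Real.pi - φ by ring] at h
    exact h
  have base2 : IntervalIntegrable (fun x : ℝ => L (x * 2⁻¹)) volume φ (Real.pi + φ) := by
    have h := (II_L2 (a := φ/2) (b := (Real.pi + φ)/2)
      (by linarith) (by linarith) (by linarith) (by linarith)).comp_mul_right (c := 2⁻¹)
    rw [show φ/2 / 2⁻¹ = φ by ring, show (Real.pi + φ)/2 / 2⁻¹ = Real.pi + φ by ring] at h
    exact h
  have hI1 : IntervalIntegrable (fun θ : ℝ => L ((θ - φ) / 2)) volume 0 Real.pi := by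
    have h := base1.comp_sub_right φ
    rw [show -φ + φ = 0 by ring, show Real.pi - φ + φ = Real.pi by ring] at h
    have he : (fun θ : ℝ => L ((θ - φ) / 2)) = fun θ : ℝ => L ((θ - φ) * 2⁻¹) := by
      funext θ; rw [div_eq_mul_inv]
    rw [he]
    exact h
  have hI2 : IntervalIntegrable (fun θ : ℝ => L ((θ + φ) / 2)) volume 0 Real.pi := by
    have h := base2.comp_add_right φ
    rw [show φ - φ = 0 by ring, show Real.pi + φ - φ = Real.pi by ring] at h
    have he : (fun θ : ℝ => L ((θ + φ) / 2)) = fun θ : ℝ => L ((θ + φ) * 2⁻¹) := by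
      funext θ; rw [div_eq_mul_inv]
    rw [he]
    exact h
  -- values of the two L pieces
  have hV1 : (∫ θ in (0:ℝ)..Real.pi, L ((θ - φ) / 2))
      = 2 * ∫ x in (-(φ/2))..((Real.pi - φ)/2), L x := by
    have h := intervalIntegral.integral_comp_sub_right (a := (0:ℝ)) (b := Real.pi)
      (fun x : ℝ => L (x / 2)) φ
    have h2 := intervalIntegral.integral_comp_div (a := -φ) (b := Real.pi - φ)
      (c := 2) (f := L) two_ne_zero
    rw [zero_sub] at h
    rw [h, h2, show -φ / 2 = -(φ/2) by ring, show (Real.pi - φ) / 2 = (Real.pi - φ)/2 from rfl,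
      smul_eq_mul]
  have hV2 : (∫ θ in (0:ℝ)..Real.pi, L ((θ + φ) / 2))
      = 2 * ∫ x in (φ/2)..((Real.pi + φ)/2), L x := by
    have h := intervalIntegral.integral_comp_add_right (a := (0:ℝ)) (b := Real.pi)
      (fun x : ℝ => L (x / 2)) φ
    have h2 := intervalIntegral.integral_comp_div (a := φ) (b := Real.pi + φ)
      (c := 2) (f := L) two_ne_zero
    rw [zero_add] at h
    rw [h, h2, smul_eq_mul]
  -- put it together
  rw [hcongr, hF]
  have hsplit : (∫ θ in (0:ℝ)..Real.pi,
      (-(2 * Real.log (2 * r)) - L ((θ - φ) / 2) - L ((θ + φ) / 2)))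
      = (∫ _ in (0:ℝ)..Real.pi, (-(2 * Real.log (2 * r)) : ℝ))
        - (∫ θ in (0:ℝ)..Real.pi, L ((θ - φ) / 2))
        - ∫ θ in (0:ℝ)..Real.pi, L ((θ + φ) / 2) := by
    rw [intervalIntegral.integral_sub (intervalIntegrable_const.sub hI1) hI2,
      intervalIntegral.integral_sub intervalIntegrable_const hI1]
  rw [hsplit, hV1, hV2, intervalIntegral.integral_const, smul_eq_mul, sub_zero]
  have hPQ := PQ_value hφ0 hφπ
  have hlog : Real.log (2 * r) = Real.log 2 + Real.log r :=
    Real.log_mul two_ne_zero (ne_of_gt hr0)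
  nlinarith [hPQ, hlog]

private lemma G_symm (v w : ℂ) : G v w = G w v := by
  simp only [G]
  have h1 : ‖v - w‖ = ‖w - v‖ := norm_sub_rev v w
  have h2 : ‖v - (starRingEnd ℂ) w‖ = ‖w - (starRingEnd ℂ) v‖ := by
    rw [← Complex.norm_conj (v - (starRingEnd ℂ) w), map_sub, Complex.conj_conj,
      norm_sub_rev]
  rw [h1, h2]
  ring_nf

/-- For every `r ∈ (0,1]`, the double average of `G` over the semicircle of radius `r` equals
`2·log(1/r)`: `π⁻² ∫₀^π ∫₀^π G(r·e^{iθ}, r·e^{iφ}) dθ dφ = 2 log(1/r)`. -/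
theorem double_average_G_semicircle (r : ℝ) (hr : r ∈ Set.Ioc (0 : ℝ) 1) :
    (Real.pi ^ 2)⁻¹ *
      ∫ θ in (0 : ℝ)..Real.pi, ∫ φ in (0 : ℝ)..Real.pi,
        G ((r : ℂ) * Complex.exp (θ * Complex.I)) ((r : ℂ) * Complex.exp (φ * Complex.I))
      = 2 * Real.log (1 / r) := by
  obtain ⟨hr0, hr1⟩ := hr
  have hπ := Real.pi_pos
  have houter : (∫ θ in (0 : ℝ)..Real.pi, ∫ φ in (0 : ℝ)..Real.pi,
      G ((r : ℂ) * Complex.exp (θ * Complex.I)) ((r : ℂ) * Complex.exp (φ * Complex.I)))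
      = ∫ _ in (0 : ℝ)..Real.pi, (-2 * Real.pi * Real.log r : ℝ) := by
    apply intervalIntegral.integral_congr
    intro θ hθ
    rw [Set.uIcc_of_le (by linarith)] at hθ
    show (∫ φ in (0 : ℝ)..Real.pi,
        G ((r : ℂ) * Complex.exp (θ * Complex.I)) ((r : ℂ) * Complex.exp (φ * Complex.I)))
        = -2 * Real.pi * Real.log r
    have hswap : (∫ φ in (0 : ℝ)..Real.pi,
        G ((r : ℂ) * Complex.exp (θ * Complex.I)) ((r : ℂ) * Complex.exp (φ * Complex.I)))
        = ∫ φ in (0 : ℝ)..Real.pi,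
        G ((r : ℂ) * Complex.exp (φ * Complex.I)) ((r : ℂ) * Complex.exp (θ * Complex.I)) := by
      apply intervalIntegral.integral_congr
      intro φ _
      exact G_symm _ _
    rw [hswap]
    exact inner_integral r hr0 hr1 hθ.1 hθ.2
  rw [houter, intervalIntegral.integral_const, smul_eq_mul, sub_zero, one_div, Real.log_inv]
  field_simp
end
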